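/- arXiv:1804.02416 — 7 statements merged into one kernel-verified Lean document; each statement's English description precedes it below -/
import Mathlib

section
/- Let H be a Hopf algebra over a field k with comultiplication Δ, counit ε and antipode S, and let C ⊆ H be a commutative Hopf subalgebra contained in the center of H (i.e. C is a subalgebra with Δ(C) ⊆ C⊗C, S(C) ⊆ C, and every element of C commutes with every element of H). For an algebra homomorphism g : C → k, let I_g denote the ideal of H generated by {z − g(z)·1 : z ∈ C}. If g₁, g₂ : C → k are algebra homomorphisms and g : C → k is their convolution product, g(z) = (g₁ ⊗ g₂)(Δ(z)), then Δ(I_g) ⊆ I_{g₁} ⊗ H + H ⊗ I_{g₂}, where I_{g₁} ⊗ H and H ⊗ I_{g₂} are viewed as subspaces of H ⊗ H. -/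
open scoped TensorProduct

/-- The ideal `I_g` of `H` generated by the elements `z - g(z)·1` for `z ∈ C`, where `C` is
embedded in `H` via `ι`.  (Since the image of `ι` is assumed central in `H`, the left ideal
span coincides with the two-sided ideal generated by these elements.) -/
def charIdeal {k C H : Type} [CommSemiring k] [CommRing C] [Ring H] [Algebra k C] [Algebra k H]
    (ι : C →ₐ[k] H) (g : C → k) : Ideal H :=
  Ideal.span (Set.range fun z : C => ι z - algebraMap k H (g z))

/-!
`Δ` is an algebra map and `I_{g₁} ⊗ H + H ⊗ I_{g₂}` is a left ideal of `H ⊗ H`, so it suffices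
to check the generators `z - g(z)·1`. Writing `Δz = ∑ aᵢ ⊗ bᵢ`, each summand of
`Δz - g(z)·1 ⊗ 1` splits as
`a ⊗ b - g₁(a)g₂(b)·1 ⊗ 1 = (a - g₁(a)) ⊗ b + g₁(a) ⊗ (b - g₂(b))`.
-/

open TensorProduct LinearMap

section TensorIdeal

variable {k A B : Type*} [CommSemiring k] [Semiring A] [Semiring B] [Algebra k A] [Algebra k B]

theorem TensorProduct.mul_mem_range_map {M N : Type*} [AddCommMonoid M] [Module k M]
    [AddCommMonoid N] [Module k N] {f : M →ₗ[k] A} {g : N →ₗ[k] B}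
    (hf : ∀ a m, a * f m ∈ range f) (hg : ∀ b n, b * g n ∈ range g)
    (w : A ⊗[k] B) {x : A ⊗[k] B} (hx : x ∈ range (map f g)) : w * x ∈ range (map f g) := by
  obtain ⟨t, rfl⟩ := hx
  induction w using TensorProduct.induction_on with
  | zero => simp
  | add w₁ w₂ h₁ h₂ => rw [add_mul]; exact add_mem h₁ h₂
  | tmul a b =>
    induction t using TensorProduct.induction_on with
    | zero => simp
    | add t₁ t₂ h₁ h₂ => rw [map_add, mul_add]; exact add_mem h₁ h₂
    | tmul m n =>
      obtain ⟨m', hm'⟩ := hf a m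
      obtain ⟨n', hn'⟩ := hg b n
      exact ⟨m' ⊗ₜ n', by simp [hm', hn']⟩

variable (k) in
/-- The left ideal `I ⊗ B + A ⊗ J` of `A ⊗ B`. -/
def Ideal.tensorSup (I : Ideal A) (J : Ideal B) : Ideal (A ⊗[k] B) where
  toAddSubmonoid :=
    (range (TensorProduct.map (I.restrictScalars k).subtype (LinearMap.id : B →ₗ[k] B))
      ⊔ range (TensorProduct.map (LinearMap.id : A →ₗ[k] A)
          (J.restrictScalars k).subtype)).toAddSubmonoid
  smul_mem' w x hx := by
    obtain ⟨u, hu, v, hv, rfl⟩ := Submodule.mem_sup.mp hx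
    have hI : ∀ (a : A) (m : I.restrictScalars k), a * m ∈ range (I.restrictScalars k).subtype :=
      fun a m => ⟨⟨a * m, I.mul_mem_left a m.2⟩, rfl⟩
    have hJ : ∀ (b : B) (n : J.restrictScalars k), b * n ∈ range (J.restrictScalars k).subtype :=
      fun b n => ⟨⟨b * n, J.mul_mem_left b n.2⟩, rfl⟩
    have hidA (a a' : A) : a * LinearMap.id (R := k) a' ∈ range (LinearMap.id : A →ₗ[k] A) :=
      ⟨a * a', rfl⟩
    have hidB (b b' : B) : b * LinearMap.id (R := k) b' ∈ range (LinearMap.id : B →ₗ[k] B) :=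
      ⟨b * b', rfl⟩
    rw [smul_eq_mul, mul_add]
    exact add_mem (Submodule.mem_sup_left (mul_mem_range_map hI hidB w hu))
      (Submodule.mem_sup_right (mul_mem_range_map hidA hJ w hv))

theorem Ideal.mem_tensorSup {I : Ideal A} {J : Ideal B} {x : A ⊗[k] B} :
    x ∈ Ideal.tensorSup k I J ↔
      x ∈ range (TensorProduct.map (I.restrictScalars k).subtype (LinearMap.id : B →ₗ[k] B))
        ⊔ range (TensorProduct.map (LinearMap.id : A →ₗ[k] A) (J.restrictScalars k).subtype) :=
  Iff.rfl

end TensorIdeal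

section

variable {k C H : Type} [CommRing k] [CommRing C] [Ring H] [Algebra k C] [Algebra k H]

theorem map_sub_mul'_map_smul_one_mem_tensorSup (ι : C →ₐ[k] H) (g₁ g₂ : C →ₗ[k] k)
    (t : C ⊗[k] C) :
    map ι.toLinearMap ι.toLinearMap t - mul' k k (map g₁ g₂ t) • (1 : H ⊗[k] H) ∈
      Ideal.tensorSup k (charIdeal ι ⇑g₁) (charIdeal ι ⇑g₂) := by
  induction t using TensorProduct.induction_on with
  | zero => simp
  | add t₁ t₂ h₁ h₂ =>
    rw [map_add, map_add, map_add, add_smul, add_sub_add_comm]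
    exact add_mem h₁ h₂
  | tmul a b =>
    have split : ι a ⊗ₜ[k] ι b - mul' k k (g₁ a ⊗ₜ g₂ b) • (1 : H ⊗[k] H)
        = (ι a - algebraMap k H (g₁ a)) ⊗ₜ[k] ι b
          + algebraMap k H (g₁ a) ⊗ₜ[k] (ι b - algebraMap k H (g₂ b)) := by
      simp only [mul'_apply, Algebra.TensorProduct.one_def, Algebra.algebraMap_eq_smul_one,
        sub_tmul, tmul_sub, smul_tmul', tmul_smul, smul_smul, mul_comm (g₂ b)]
      abel
    simp only [map_tmul, AlgHom.toLinearMap_apply, split]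
    exact add_mem (Submodule.mem_sup_left ⟨⟨_, Ideal.subset_span ⟨a, rfl⟩⟩ ⊗ₜ ι b, rfl⟩)
      (Submodule.mem_sup_right ⟨_ ⊗ₜ ⟨_, Ideal.subset_span ⟨b, rfl⟩⟩, rfl⟩)

end

theorem comul_charIdeal_mem_general (k C H : Type) [Field k]
    [CommRing C] [HopfAlgebra k C] [Ring H] [HopfAlgebra k H]
    (ι : C →ₐ[k] H)
    (hcomul : ∀ z : C, Coalgebra.comul (R := k) (ι z)
      = TensorProduct.map ι.toLinearMap ι.toLinearMap (Coalgebra.comul (R := k) z))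
    (g₁ g₂ g : C →ₐ[k] k)
    (hg : ∀ z : C, g z
      = LinearMap.mul' k k
          (TensorProduct.map g₁.toLinearMap g₂.toLinearMap (Coalgebra.comul (R := k) z))) :
    ∀ x ∈ charIdeal ι (g : C → k), Coalgebra.comul (R := k) x ∈
      LinearMap.range (TensorProduct.map
          (Submodule.restrictScalars k (charIdeal ι (g₁ : C → k))).subtype
          (LinearMap.id : H →ₗ[k] H))
      ⊔ LinearMap.range (TensorProduct.map (LinearMap.id : H →ₗ[k] H)
          (Submodule.restrictScalars k (charIdeal ι (g₂ : C → k))).subtype) := by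
  suffices charIdeal ι g ≤ (Ideal.tensorSup k (charIdeal ι g₁) (charIdeal ι g₂)).comap
      (Bialgebra.comulAlgHom k H) from fun x hx => Ideal.mem_tensorSup.mp (this hx)
  refine Ideal.span_le.mpr ?_
  rintro _ ⟨z, rfl⟩
  have hgen := map_sub_mul'_map_smul_one_mem_tensorSup ι g₁.toLinearMap g₂.toLinearMap
    (Coalgebra.comul z)
  simpa [hcomul, hg, Algebra.algebraMap_eq_smul_one] using hgen

/-- If `g` is the convolution product of the algebra homomorphisms `g₁, g₂ : C → k`, then
`Δ(I_g) ⊆ I_{g₁} ⊗ H + H ⊗ I_{g₂}`. -/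
theorem comul_charIdeal_mem (k C H : Type) [Field k]
    [CommRing C] [HopfAlgebra k C] [Ring H] [HopfAlgebra k H]
    (ι : C →ₐ[k] H) (hinj : Function.Injective ι)
    (hcomul : ∀ z : C, Coalgebra.comul (R := k) (ι z)
      = TensorProduct.map ι.toLinearMap ι.toLinearMap (Coalgebra.comul (R := k) z))
    (hcounit : ∀ z : C, Coalgebra.counit (R := k) (ι z) = Coalgebra.counit (R := k) z)
    (hantipode : ∀ z : C, HopfAlgebra.antipode (R := k) (ι z)
      = ι (HopfAlgebra.antipode (R := k) z))
    (hcentral : ∀ (z : C) (h : H), ι z * h = h * ι z)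
    (g₁ g₂ g : C →ₐ[k] k)
    (hg : ∀ z : C, g z
      = LinearMap.mul' k k
          (TensorProduct.map g₁.toLinearMap g₂.toLinearMap (Coalgebra.comul (R := k) z))) :
    ∀ x ∈ charIdeal ι (g : C → k), Coalgebra.comul (R := k) x ∈
      LinearMap.range (TensorProduct.map
          (Submodule.restrictScalars k (charIdeal ι (g₁ : C → k))).subtype
          (LinearMap.id : H →ₗ[k] H))
      ⊔ LinearMap.range (TensorProduct.map (LinearMap.id : H →ₗ[k] H)
          (Submodule.restrictScalars k (charIdeal ι (g₂ : C → k))).subtype) :=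
  comul_charIdeal_mem_general k C H ι hcomul g₁ g₂ g hg
end

section
/- Let H be a finite type Hopf G-coalgebra over a field k in which every antipode map S_α : H_α → H_{α⁻¹} is bijective, let μ be a right G-integral for H, and let a = (a_α)_{α∈G} be a G-comodulus for μ. Then for every α ∈ G and every x ∈ H_α one has μ_{α⁻¹}(S_α(x)) = μ_α(a_α x). -/
open scoped TensorProduct

/-- Transport along an equality of indices, as an algebra isomorphism. -/
def castAlg (k : Type) [CommSemiring k] {G : Type} {H : G → Type}
    [∀ γ : G, Ring (H γ)] [∀ γ : G, Algebra k (H γ)]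
    {γ γ' : G} (h : γ = γ') : H γ ≃ₐ[k] H γ' := by
  subst h; exact AlgEquiv.refl

/-- A Hopf `G`-coalgebra over a field `k`. -/
structure HopfGCoalgebra (k G : Type) [Field k] [Group G] (H : G → Type)
    [∀ γ : G, Ring (H γ)] [∀ γ : G, Algebra k (H γ)] where
  Δ : ∀ α β : G, H (α * β) →ₐ[k] (H α ⊗[k] H β)
  ε : H (1 : G) →ₐ[k] k
  S : ∀ γ : G, H γ →ₗ[k] H γ⁻¹
  coassoc : ∀ (α β γ : G) (x : H (α * β * γ)),
    (TensorProduct.map (Δ α β).toLinearMap LinearMap.id) (Δ (α * β) γ x)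
      = (TensorProduct.assoc k (H α) (H β) (H γ)).symm
          ((TensorProduct.map LinearMap.id (Δ β γ).toLinearMap)
            (Δ α (β * γ) (castAlg k (mul_assoc α β γ) x)))
  counit_right : ∀ (α : G) (x : H (α * 1)),
    (TensorProduct.rid k (H α)) ((TensorProduct.map LinearMap.id ε.toLinearMap) (Δ α 1 x))
      = castAlg k (mul_one α) x
  counit_left : ∀ (α : G) (x : H (1 * α)),
    (TensorProduct.lid k (H α)) ((TensorProduct.map ε.toLinearMap LinearMap.id) (Δ 1 α x))
      = castAlg k (one_mul α) x
  antipode_left : ∀ (α : G) (x : H (α⁻¹ * α)),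
    (LinearMap.mul' k (H α))
      ((TensorProduct.map ((castAlg k (inv_inv α)).toLinearMap ∘ₗ S α⁻¹) LinearMap.id)
        (Δ α⁻¹ α x))
      = ε (castAlg k (inv_mul_cancel α) x) • 1
  antipode_right : ∀ (α : G) (x : H (α * α⁻¹)),
    (LinearMap.mul' k (H α))
      ((TensorProduct.map LinearMap.id ((castAlg k (inv_inv α)).toLinearMap ∘ₗ S α⁻¹))
        (Δ α α⁻¹ x))
      = ε (castAlg k (mul_inv_cancel α) x) • 1

namespace HopfGCoalgebra

variable {k G : Type} [Field k] [Group G] {H : G → Type}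
  [∀ γ : G, Ring (H γ)] [∀ γ : G, Algebra k (H γ)]

/-- A family of linear forms is a right `G`-integral. -/
def IsRightIntegral (D : HopfGCoalgebra k G H) (μ : ∀ γ : G, H γ →ₗ[k] k) : Prop :=
  ∀ (α β : G) (x : H (α * β)),
    (TensorProduct.lid k (H β)) ((TensorProduct.map (μ α) LinearMap.id) (D.Δ α β x))
      = μ (α * β) x • 1

/-- A family of linear forms is a left `G`-integral. -/
def IsLeftIntegral (D : HopfGCoalgebra k G H) (μ : ∀ γ : G, H γ →ₗ[k] k) : Prop :=
  ∀ (α β : G) (x : H (α * β)),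
    (TensorProduct.rid k (H α)) ((TensorProduct.map LinearMap.id (μ β)) (D.Δ α β x))
      = μ (α * β) x • 1

/-- A family of invertible elements is a pivot. -/
structure IsPivot (D : HopfGCoalgebra k G H) (g : ∀ γ : G, (H γ)ˣ) : Prop where
  delta : ∀ α β : G, D.Δ α β (g (α * β) : H (α * β)) = (g α : H α) ⊗ₜ[k] (g β : H β)
  counit : D.ε (g 1 : H 1) = 1
  antipode : ∀ (α : G) (x : H α),
    castAlg k (inv_inv α) (D.S α⁻¹ (D.S α x)) = (g α : H α) * x * ((g α)⁻¹ : (H α)ˣ)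

/-- `H` is unimodular if `H₁` admits a nonzero two-sided cointegral. -/
def IsUnimodular (D : HopfGCoalgebra k G H) : Prop :=
  ∃ Λ : H 1, Λ ≠ 0 ∧ ∀ h : H 1, h * Λ = D.ε h • Λ ∧ Λ * h = D.ε h • Λ

/-- A `G`-comodulus for a right `G`-integral `μ`. -/
structure IsComodulus (D : HopfGCoalgebra k G H) (μ : ∀ γ : G, H γ →ₗ[k] k)
    (a : ∀ γ : G, (H γ)ˣ) : Prop where
  delta : ∀ α β : G, D.Δ α β (a (α * β) : H (α * β)) = (a α : H α) ⊗ₜ[k] (a β : H β)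
  counit : D.ε (a 1 : H 1) = 1
  rel : ∀ (α β : G) (x : H (α * β)),
    (TensorProduct.rid k (H α)) ((TensorProduct.map LinearMap.id (μ β)) (D.Δ α β x))
      = μ (α * β) x • (a α : H α)

end HopfGCoalgebra


/-!
If `μ₁ = 0`, the comodulus relation `(id ⊗ μ₁) Δ_{γ,1} = μ_γ(·) a_γ` with `a_γ` invertible forces
`μ = 0`. Otherwise everything rests on the Sweedler identity, for `x ∈ H₁` and `y ∈ H_α`,
`(μ_α ⊗ id)(Δ_{α,α⁻¹}(x) (y ⊗ 1)) = S_α(μ₁(x y₍₁₎) y₍₂₎)`,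
obtained by writing `y ⊗ 1 = y₍₁₎ ⊗ y₍₂₎ S_α(y₍₃₎)` and using that `μ` is a right integral.
At `α = 1` it shows that `h ↦ μ₁(h ·) : H₁ → H₁*` is injective (the antipode axiom first gives
`ε h = 0` on its kernel, then the counit axiom gives `h = 0`), hence bijective as `H₁` is
finite-dimensional: there is `Λ ∈ H₁` with `μ₁(Λ u) = ε(u)`. For `x = Λ` the right side of the
identity is `S_α(y)`; applying `μ_{α⁻¹}` to the left side and using the comodulus relation gives
`μ_{α⁻¹}(S_α y) = μ₁(Λ) μ_α(a_α y) = μ_α(a_α y)`.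
-/

open TensorProduct

section TensorProductAlgebra

variable {k A B : Type} [CommSemiring k] [Semiring A] [Semiring B] [Algebra k A] [Algebra k B]

theorem lid_map_mul_one_tmul (f : A →ₗ[k] k) (t : A ⊗[k] B) (w : B) :
    TensorProduct.lid k B (map f LinearMap.id (t * (1 ⊗ₜ w)))
      = TensorProduct.lid k B (map f LinearMap.id t) * w := by
  induction t using TensorProduct.induction_on with
  | zero => simp
  | tmul p q => simp
  | add s t hs ht => simp [add_mul, hs, ht]

theorem apply_lid_map_mul_tmul_one (f : A →ₗ[k] k) (g : B →ₗ[k] k) (t : A ⊗[k] B) (y : A) :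
    g (TensorProduct.lid k B (map f LinearMap.id (t * (y ⊗ₜ 1))))
      = f (TensorProduct.rid k A (map LinearMap.id g t) * y) := by
  induction t using TensorProduct.induction_on with
  | zero => simp
  | tmul p q => simp [mul_comm]
  | add s t hs ht => simp [add_mul, hs, ht]

theorem dualTensorHom_map_compr₂_mul (f : A →ₗ[k] k) (t : A ⊗[k] B) (y : A) :
    dualTensorHom k A B (map ((LinearMap.mul k A).compr₂ f) LinearMap.id t) y
      = TensorProduct.lid k B (map f LinearMap.id (t * (y ⊗ₜ 1))) := by
  induction t using TensorProduct.induction_on with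
  | zero => simp
  | tmul p q => simp
  | add s t hs ht => simp [add_mul, hs, ht]

theorem apply_mul'_map_mul_eq_zero_of_map_compr₂_eq_zero (f : A →ₗ[k] k) (g : B →ₗ[k] A)
    {t : A ⊗[k] B} (ht : map ((LinearMap.mul k A).compr₂ f) LinearMap.id t = 0) (x : A) :
    f (LinearMap.mul' k A (map LinearMap.id g t) * x) = 0 := by
  have key : ∀ t : A ⊗[k] B, f (LinearMap.mul' k A (map LinearMap.id g t) * x)
      = lift (LinearMap.lcomp k k (LinearMap.mulRight k x ∘ₗ g))
          (map ((LinearMap.mul k A).compr₂ f) LinearMap.id t) := by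
    intro t
    induction t using TensorProduct.induction_on with
    | zero => simp
    | tmul p q => simp [mul_assoc]
    | add s t hs ht => simp [add_mul, hs, ht]
  rw [key, ht, map_zero]

theorem map_mul'_comp_assoc_tmul {C : Type} [AddCommMonoid C] [Module k C] (g : C →ₗ[k] B)
    (s : A ⊗[k] B) (v : C) :
    map LinearMap.id (LinearMap.mul' k B ∘ₗ map LinearMap.id g)
        (TensorProduct.assoc k A B C (s ⊗ₜ v)) = s * (1 ⊗ₜ g v) := by
  induction s using TensorProduct.induction_on with
  | zero => simp
  | tmul p q => simp
  | add s t hs ht => simp [add_mul, add_tmul, hs, ht]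

end TensorProductAlgebra

section Cast

variable {k G : Type} [CommSemiring k] {H : G → Type}
  [∀ γ : G, Ring (H γ)] [∀ γ : G, Algebra k (H γ)]

@[simp] theorem castAlg_refl_apply {γ : G} (x : H γ) : castAlg k (rfl : γ = γ) x = x := rfl

@[simp] theorem castAlg_refl_toLinearMap {γ : G} :
    (castAlg (H := H) k (rfl : γ = γ)).toLinearMap = LinearMap.id := rfl

@[simp] theorem castAlg_castAlg {γ γ' γ'' : G} (h : γ = γ') (h' : γ' = γ'') (x : H γ) :
    castAlg k h' (castAlg k h x) = castAlg k (h.trans h') x := by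
  subst h h'; rfl

theorem apply_castAlg {M : Type} [AddCommMonoid M] [Module k M] (f : ∀ γ : G, H γ →ₗ[k] M)
    {γ γ' : G} (h : γ = γ') (x : H γ) : f γ' (castAlg k h x) = f γ x := by
  subst h; rfl

end Cast

namespace HopfGCoalgebra

variable {k G : Type} [Field k] [Group G] {H : G → Type}
  [∀ γ : G, Ring (H γ)] [∀ γ : G, Algebra k (H γ)] (D : HopfGCoalgebra k G H)

theorem S_castAlg {γ γ' : G} (h : γ = γ') (x : H γ) :
    D.S γ' (castAlg k h x) = castAlg k (congrArg Inv.inv h) (D.S γ x) := by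
  subst h; rfl

theorem Δ_castAlg_left {α α' : G} (β : G) (h : α = α') (x : H (α * β)) :
    D.Δ α' β (castAlg k (congrArg (· * β) h) x)
      = map (castAlg k h).toLinearMap LinearMap.id (D.Δ α β x) := by
  subst h; simp

theorem Δ_castAlg_right (α : G) {β β' : G} (h : β = β') (x : H (α * β)) :
    D.Δ α β' (castAlg k (congrArg (α * ·) h) x)
      = map LinearMap.id (castAlg k h).toLinearMap (D.Δ α β x) := by
  subst h; simp

/-! The components `Δ_{α,1}`, `Δ_{1,α}`, `Δ_{α,α⁻¹}` and `Δ_{α⁻¹,α}` of the coproduct, with their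
domains transported to `H α`, resp. `H 1`. -/

noncomputable def comulUnitRight (α : G) : H α →ₗ[k] H α ⊗[k] H 1 :=
  (D.Δ α 1).toLinearMap ∘ₗ (castAlg k (mul_one α).symm).toLinearMap

noncomputable def comulUnitLeft (α : G) : H α →ₗ[k] H 1 ⊗[k] H α :=
  (D.Δ 1 α).toLinearMap ∘ₗ (castAlg k (one_mul α).symm).toLinearMap

noncomputable def comulInvRight (α : G) : H 1 →ₗ[k] H α ⊗[k] H α⁻¹ :=
  (D.Δ α α⁻¹).toLinearMap ∘ₗ (castAlg k (mul_inv_cancel α).symm).toLinearMap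

noncomputable def comulInvLeft (α : G) : H 1 →ₗ[k] H α⁻¹ ⊗[k] H α :=
  (D.Δ α⁻¹ α).toLinearMap ∘ₗ (castAlg k (inv_mul_cancel α).symm).toLinearMap

theorem comulInvRight_mul (α : G) (u v : H 1) :
    D.comulInvRight α (u * v) = D.comulInvRight α u * D.comulInvRight α v := by
  simp [comulInvRight]

theorem comulInvRight_one_eq_comulUnitLeft (h : H 1) :
    D.comulInvRight 1 h = D.comulUnitLeft 1⁻¹ (castAlg k inv_one.symm h) := by
  simp [comulInvRight, comulUnitLeft]

theorem counit_comulUnitRight (α : G) (y : H α) :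
    TensorProduct.rid k (H α) (map LinearMap.id D.ε.toLinearMap (D.comulUnitRight α y)) = y := by
  simpa [comulUnitRight] using D.counit_right α (castAlg k (mul_one α).symm y)

theorem counit_comulUnitLeft (α : G) (y : H α) :
    TensorProduct.lid k (H α) (map D.ε.toLinearMap LinearMap.id (D.comulUnitLeft α y)) = y := by
  simpa [comulUnitLeft] using D.counit_left α (castAlg k (one_mul α).symm y)

theorem mul'_map_antipode_comulInvRight (α : G) (h : H 1) :
    LinearMap.mul' k (H α)
        (map LinearMap.id ((castAlg k (inv_inv α)).toLinearMap ∘ₗ D.S α⁻¹)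
          (D.comulInvRight α h))
      = D.ε h • 1 := by
  simpa [comulInvRight] using D.antipode_right α (castAlg k (mul_inv_cancel α).symm h)

theorem mul'_map_antipode_comulInvLeft (α : G) (u : H 1) :
    LinearMap.mul' k (H α⁻¹) (map LinearMap.id (D.S α) (D.comulInvLeft α u)) = D.ε u • 1 := by
  have hS : D.S α ∘ₗ (castAlg k (inv_inv α)).toLinearMap
      = (castAlg k (inv_inv α⁻¹)).toLinearMap ∘ₗ D.S α⁻¹⁻¹ :=
    LinearMap.ext fun w => by simpa using D.S_castAlg (inv_inv α : α⁻¹⁻¹ = α) w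
  have hcast : castAlg k (inv_mul_cancel α).symm u = castAlg k (congrArg (α⁻¹ * ·) (inv_inv α))
      (castAlg k (mul_inv_cancel α⁻¹).symm u) := by
    rw [castAlg_castAlg]
  rw [comulInvLeft, LinearMap.comp_apply, AlgEquiv.toLinearMap_apply, hcast,
    AlgHom.toLinearMap_apply, D.Δ_castAlg_right α⁻¹ (inv_inv α), map_map, LinearMap.id_comp, hS]
  simpa using D.antipode_right α⁻¹ (castAlg k (mul_inv_cancel α⁻¹).symm u)

theorem map_comulInvRight_comulUnitLeft (α : G) (y : H α) :
    map (D.comulInvRight α) LinearMap.id (D.comulUnitLeft α y)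
      = (TensorProduct.assoc k (H α) (H α⁻¹) (H α)).symm
          (map LinearMap.id (D.comulInvLeft α) (D.comulUnitRight α y)) := by
  have hα : α = α * α⁻¹ * α := by rw [mul_inv_cancel, one_mul]
  have C := D.coassoc α α⁻¹ α (castAlg k hα y)
  have hleft : castAlg k hα y = castAlg k (congrArg (· * α) (mul_inv_cancel α).symm)
      (castAlg k (one_mul α).symm y) := by simp
  have hright : castAlg k (mul_assoc α α⁻¹ α) (castAlg k hα y)
      = castAlg k (congrArg (α * ·) (inv_mul_cancel α).symm) (castAlg k (mul_one α).symm y) := by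
    simp
  rw [hright, hleft, D.Δ_castAlg_left, D.Δ_castAlg_right, map_map, map_map] at C
  simpa [comulUnitLeft, comulUnitRight, comulInvRight, comulInvLeft] using C

theorem map_antipode_comulInvLeft_comulUnitRight (α : G) (y : H α) :
    map LinearMap.id (LinearMap.mul' k (H α⁻¹) ∘ₗ map LinearMap.id (D.S α) ∘ₗ D.comulInvLeft α)
        (D.comulUnitRight α y) = y ⊗ₜ 1 := by
  have hε : LinearMap.mul' k (H α⁻¹) ∘ₗ map LinearMap.id (D.S α) ∘ₗ D.comulInvLeft α
      = Algebra.linearMap k (H α⁻¹) ∘ₗ D.ε.toLinearMap :=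
    LinearMap.ext fun u => by
      simpa [Algebra.algebraMap_eq_smul_one] using D.mul'_map_antipode_comulInvLeft α u
  have hsplit : ∀ t : H α ⊗[k] H 1,
      map LinearMap.id (Algebra.linearMap k (H α⁻¹) ∘ₗ D.ε.toLinearMap) t
        = TensorProduct.rid k (H α) (map LinearMap.id D.ε.toLinearMap t) ⊗ₜ 1 := by
    intro t
    induction t using TensorProduct.induction_on with
    | zero => simp
    | tmul u v => simp [Algebra.algebraMap_eq_smul_one, TensorProduct.smul_tmul']
    | add s t hs ht => simp [hs, ht, add_tmul]
  rw [hε, hsplit, counit_comulUnitRight]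

variable {D}

theorem IsRightIntegral.lid_map_comulInvRight {μ : ∀ γ : G, H γ →ₗ[k] k}
    (hμ : D.IsRightIntegral μ) (α : G) (z : H 1) :
    TensorProduct.lid k (H α⁻¹) (map (μ α) LinearMap.id (D.comulInvRight α z)) = μ 1 z • 1 := by
  simpa [comulInvRight, apply_castAlg μ] using hμ α α⁻¹ (castAlg k (mul_inv_cancel α).symm z)

theorem IsComodulus.rid_map_comulInvRight {μ : ∀ γ : G, H γ →ₗ[k] k} {a : ∀ γ : G, (H γ)ˣ}
    (ha : D.IsComodulus μ a) (α : G) (z : H 1) :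
    TensorProduct.rid k (H α) (map LinearMap.id (μ α⁻¹) (D.comulInvRight α z))
      = μ 1 z • (a α : H α) := by
  simpa [comulInvRight, apply_castAlg μ] using ha.rel α α⁻¹ (castAlg k (mul_inv_cancel α).symm z)

theorem IsComodulus.eq_zero_of_one_eq_zero {μ : ∀ γ : G, H γ →ₗ[k] k} {a : ∀ γ : G, (H γ)ˣ}
    (ha : D.IsComodulus μ a) (h0 : μ 1 = 0) (γ : G) : μ γ = 0 := by
  ext x
  have hrel := ha.rel γ 1 (castAlg k (mul_one γ).symm x)
  rw [apply_castAlg μ, h0, map_zero_right, LinearMap.zero_apply, map_zero] at hrel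
  rcases subsingleton_or_nontrivial (H γ) with _ | _
  · rw [Subsingleton.elim x 0, map_zero, LinearMap.zero_apply]
  · exact (smul_eq_zero.mp hrel.symm).resolve_right (a γ).ne_zero

theorem IsRightIntegral.lid_map_comulInvRight_mul_tmul_one {μ : ∀ γ : G, H γ →ₗ[k] k}
    (hμ : D.IsRightIntegral μ) (α : G) (x : H 1) (y : H α) :
    TensorProduct.lid k (H α⁻¹) (map (μ α) LinearMap.id (D.comulInvRight α x * (y ⊗ₜ 1)))
      = D.S α (TensorProduct.lid k (H α)
          (map ((LinearMap.mul k (H 1)).compr₂ (μ 1) x) LinearMap.id (D.comulUnitLeft α y))) := by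
  set E : H 1 ⊗[k] H α →ₗ[k] H α ⊗[k] H α⁻¹ :=
    map LinearMap.id (LinearMap.mul' k (H α⁻¹) ∘ₗ map LinearMap.id (D.S α)) ∘ₗ
      (TensorProduct.assoc k (H α) (H α⁻¹) (H α)).toLinearMap ∘ₗ
        map (D.comulInvRight α) LinearMap.id
  have hE : E (D.comulUnitLeft α y) = y ⊗ₜ 1 := by
    simp only [E, LinearMap.comp_apply, LinearEquiv.coe_toLinearMap,
      map_comulInvRight_comulUnitLeft, LinearEquiv.apply_symm_apply, map_map, LinearMap.id_comp]
    exact D.map_antipode_comulInvLeft_comulUnitRight α y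
  have hcomp : TensorProduct.lid k (H α⁻¹) ∘ₗ map (μ α) LinearMap.id ∘ₗ
        LinearMap.mulLeft k (D.comulInvRight α x) ∘ₗ E
      = D.S α ∘ₗ TensorProduct.lid k (H α) ∘ₗ
          map ((LinearMap.mul k (H 1)).compr₂ (μ 1) x) LinearMap.id := by
    refine TensorProduct.ext' fun u v => ?_
    simp only [E, LinearMap.comp_apply, LinearEquiv.coe_toLinearMap, map_tmul,
      LinearMap.id_apply, LinearMap.mulLeft_apply]
    rw [map_mul'_comp_assoc_tmul, ← mul_assoc, ← comulInvRight_mul, lid_map_mul_one_tmul,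
      hμ.lid_map_comulInvRight]
    simp
  simpa [hE] using congr($hcomp (D.comulUnitLeft α y))

theorem IsRightIntegral.map_compr₂_comulInvRight_eq_zero [FiniteDimensional k (H 1)]
    {μ : ∀ γ : G, H γ →ₗ[k] k} (hμ : D.IsRightIntegral μ) {h : H 1}
    (hh : (LinearMap.mul k (H 1)).compr₂ (μ 1) h = 0) :
    map ((LinearMap.mul k (H 1)).compr₂ (μ 1)) LinearMap.id (D.comulInvRight 1 h) = 0 := by
  refine (dualTensorHom_bijective (R := k) (M := H 1) (N := H 1⁻¹)).injective ?_
  ext y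
  rw [dualTensorHom_map_compr₂_mul, hμ.lid_map_comulInvRight_mul_tmul_one, hh, map_zero_left]
  simp

theorem IsRightIntegral.counit_eq_zero_of_compr₂_eq_zero [FiniteDimensional k (H 1)]
    {μ : ∀ γ : G, H γ →ₗ[k] k} (hμ : D.IsRightIntegral μ) (hne : μ 1 ≠ 0) {h : H 1}
    (hh : (LinearMap.mul k (H 1)).compr₂ (μ 1) h = 0) : D.ε h = 0 := by
  obtain ⟨x, hx⟩ := DFunLike.ne_iff.mp hne
  -- `ε(h) μ₁(x) = μ₁(h₍₁₎ S(h₍₂₎) x)` only sees the first leg of `Δ h` through `μ₁(h₍₁₎ ·)`.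
  have hεx : D.ε h * μ 1 x = 0 := by
    rw [← smul_eq_mul, ← map_smul, ← one_mul x, ← smul_mul_assoc,
      ← D.mul'_map_antipode_comulInvRight]
    exact apply_mul'_map_mul_eq_zero_of_map_compr₂_eq_zero _ _
      (hμ.map_compr₂_comulInvRight_eq_zero hh) x
  exact (mul_eq_zero.mp hεx).resolve_right hx

theorem IsRightIntegral.compr₂_injective [FiniteDimensional k (H 1)]
    {μ : ∀ γ : G, H γ →ₗ[k] k} (hμ : D.IsRightIntegral μ) (hne : μ 1 ≠ 0) :
    Function.Injective ((LinearMap.mul k (H 1)).compr₂ (μ 1)) := by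
  set Φ := (LinearMap.mul k (H 1)).compr₂ (μ 1)
  obtain ⟨g, hg⟩ : D.ε.toLinearMap ∈ LinearMap.range Φ.dualMap := by
    rw [LinearMap.range_dualMap_eq_dualAnnihilator_ker, Submodule.mem_dualAnnihilator]
    exact fun w hw => hμ.counit_eq_zero_of_compr₂_eq_zero hne hw
  rw [← LinearMap.ker_eq_bot, LinearMap.ker_eq_bot']
  intro h hh
  have hεΔ : map D.ε.toLinearMap LinearMap.id (D.comulInvRight 1 h) = 0 := by
    rw [← hg, LinearMap.dualMap_apply', ← LinearMap.id_comp LinearMap.id, map_comp,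
      LinearMap.comp_apply, hμ.map_compr₂_comulInvRight_eq_zero hh, map_zero]
  have hcast := D.counit_comulUnitLeft 1⁻¹ (castAlg k inv_one.symm h)
  rw [← comulInvRight_one_eq_comulUnitLeft, hεΔ, map_zero] at hcast
  exact (map_eq_zero_iff _ (castAlg k inv_one.symm).injective).mp hcast.symm

theorem IsRightIntegral.exists_compr₂_eq_counit [FiniteDimensional k (H 1)]
    {μ : ∀ γ : G, H γ →ₗ[k] k} (hμ : D.IsRightIntegral μ) (hne : μ 1 ≠ 0) :
    ∃ Λ : H 1, (LinearMap.mul k (H 1)).compr₂ (μ 1) Λ = D.ε.toLinearMap :=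
  (LinearMap.injective_iff_surjective_of_finrank_eq_finrank Subspace.dual_finrank_eq.symm).mp
    (hμ.compr₂_injective hne) _

end HopfGCoalgebra

open HopfGCoalgebra in
/-- For a finite type Hopf `G`-coalgebra with bijective antipode, right `G`-integral `μ` and
`G`-comodulus `a`, one has `μ_{α⁻¹}(S_α(x)) = μ_α(a_α x)`. -/
theorem integral_comp_antipode_eq_comodulus_mul
    {k G : Type} [Field k] [Group G] {H : G → Type}
    [∀ γ : G, Ring (H γ)] [∀ γ : G, Algebra k (H γ)] [∀ γ : G, FiniteDimensional k (H γ)]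
    (D : HopfGCoalgebra k G H) (hS : ∀ γ : G, Function.Bijective (D.S γ))
    (μ : ∀ γ : G, H γ →ₗ[k] k) (hμ : D.IsRightIntegral μ)
    (a : ∀ γ : G, (H γ)ˣ) (ha : D.IsComodulus μ a) :
    ∀ (α : G) (x : H α), μ α⁻¹ (D.S α x) = μ α ((a α : H α) * x) := by
  intro α y
  by_cases h0 : μ 1 = 0
  · simp [ha.eq_zero_of_one_eq_zero h0]
  obtain ⟨Λ, hΛ⟩ := hμ.exists_compr₂_eq_counit h0
  have hΛ1 : μ 1 Λ = 1 := by simpa using congr($hΛ 1)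
  calc μ α⁻¹ (D.S α y)
      = μ α⁻¹ (TensorProduct.lid k (H α⁻¹)
          (map (μ α) LinearMap.id (D.comulInvRight α Λ * (y ⊗ₜ 1)))) := by
        rw [hμ.lid_map_comulInvRight_mul_tmul_one, hΛ, D.counit_comulUnitLeft]
    _ = μ α (TensorProduct.rid k (H α) (map LinearMap.id (μ α⁻¹) (D.comulInvRight α Λ)) * y) :=
        apply_lid_map_mul_tmul_one _ _ _ _
    _ = μ α ((a α : H α) * y) := by rw [ha.rid_map_comulInvRight, hΛ1, one_smul]
end

section
/- Let (H, g) be a finite type pivotal Hopf G-coalgebra over a field k which is unimodular, let μ be a right G-integral with μ_α ≠ 0 for every α ∈ G, and let a = (a_α)_{α∈G} be a G-comodulus for μ. Define the left G-integral μ^l by μ^l_α(x) := μ_α(a_α x), the symmetrised right G-integral μ̃_α(x) := μ_α(g_α x), and the symmetrised left G-integral μ̃^l_α(x) := μ^l_α(g_α⁻¹ x). Then μ̃_α = μ̃^l_α for every α ∈ G (i.e. (H, g) is G-unibalanced) if and only if a_α = g_α² for every α ∈ G. -/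
/-!
Unibalancedness says exactly that each `μ γ` is invariant under left multiplication by
`d γ = a γ g γ⁻¹ g γ⁻¹`, and `d` is grouplike. Applying `μ 1 ⊗ id` to
`Δ (d x) = (d 1 ⊗ d γ) Δ x` and using that `μ` is a right integral gives `μ x • 1 = μ x • d γ`,
so `d γ = 1` as soon as `μ ≠ 0`.
-/

open scoped TensorProduct

namespace HopfGCoalgebra

variable {k G : Type} [Field k] [Group G] {H : G → Type}
  [∀ γ : G, Ring (H γ)] [∀ γ : G, Algebra k (H γ)]

def IsGrouplike (D : HopfGCoalgebra k G H) (u : ∀ γ : G, (H γ)ˣ) : Prop :=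
  ∀ α β : G, D.Δ α β (u (α * β) : H (α * β)) = (u α : H α) ⊗ₜ[k] (u β : H β)

variable {D : HopfGCoalgebra k G H}

theorem IsPivot.isGrouplike {g : ∀ γ : G, (H γ)ˣ} (hg : D.IsPivot g) : D.IsGrouplike g :=
  hg.delta

theorem IsComodulus.isGrouplike {μ : ∀ γ : G, H γ →ₗ[k] k} {a : ∀ γ : G, (H γ)ˣ}
    (ha : D.IsComodulus μ a) : D.IsGrouplike a :=
  ha.delta

theorem IsGrouplike.mul {u v : ∀ γ : G, (H γ)ˣ} (hu : D.IsGrouplike u) (hv : D.IsGrouplike v) :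
    D.IsGrouplike (u * v) := by
  intro α β
  simp only [Pi.mul_apply, Units.val_mul, map_mul, hu α β, hv α β,
    Algebra.TensorProduct.tmul_mul_tmul]

theorem IsGrouplike.inv {u : ∀ γ : G, (H γ)ˣ} (hu : D.IsGrouplike u) :
    D.IsGrouplike u⁻¹ := by
  intro α β
  refine left_inv_eq_right_inv (a := (u α : H α) ⊗ₜ[k] (u β : H β)) ?_ ?_
  · rw [← hu α β, ← map_mul, Pi.inv_apply, Units.inv_mul, map_one]
  · rw [Algebra.TensorProduct.tmul_mul_tmul, Pi.inv_apply, Pi.inv_apply, Units.mul_inv,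
      Units.mul_inv, Algebra.TensorProduct.one_def]

theorem IsRightIntegral.smul_grouplike {μ : ∀ γ : G, H γ →ₗ[k] k} (hμ : D.IsRightIntegral μ)
    {u : ∀ γ : G, (H γ)ˣ} (hu : D.IsGrouplike u) {α : G}
    (hinv : ∀ y : H α, μ α ((u α : H α) * y) = μ α y) (β : G) (x : H (α * β)) :
    μ (α * β) ((u (α * β) : H (α * β)) * x) • (1 : H β) = μ (α * β) x • (u β : H β) := by
  have hmap : ∀ t : H α ⊗[k] H β,
      TensorProduct.lid k (H β) (TensorProduct.map (μ α) LinearMap.id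
          (((u α : H α) ⊗ₜ[k] (u β : H β)) * t))
        = (u β : H β) * TensorProduct.lid k (H β) (TensorProduct.map (μ α) LinearMap.id t) := by
    intro t
    induction t using TensorProduct.induction_on with
    | zero => simp
    | tmul y z =>
      simp only [Algebra.TensorProduct.tmul_mul_tmul, TensorProduct.map_tmul, LinearMap.id_coe,
        id_eq, TensorProduct.lid_tmul, hinv, mul_smul_comm]
    | add s t hs ht => simp only [mul_add, map_add, hs, ht]
  rw [← hμ, map_mul, hu, hmap, hμ, mul_smul_comm, mul_one]

theorem IsRightIntegral.grouplike_eq_one {μ : ∀ γ : G, H γ →ₗ[k] k} (hμ : D.IsRightIntegral μ)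
    {u : ∀ γ : G, (H γ)ˣ} (hu : D.IsGrouplike u)
    (hinv : ∀ (γ : G) (y : H γ), μ γ ((u γ : H γ) * y) = μ γ y) {γ : G} (hμγ : μ (1 * γ) ≠ 0) :
    u γ = 1 := by
  obtain ⟨x, hx⟩ : ∃ x : H (1 * γ), μ (1 * γ) x ≠ 0 := by
    by_contra! h
    exact hμγ (LinearMap.ext h)
  have hsmul := hμ.smul_grouplike hu (hinv 1) γ x
  rw [hinv] at hsmul
  exact Units.ext (smul_right_injective (H γ) hx hsmul).symm

end HopfGCoalgebra

open HopfGCoalgebra in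
/-- A finite type unimodular pivotal Hopf `G`-coalgebra is `G`-unibalanced (its symmetrised
right `G`-integral is also a symmetrised left `G`-integral) if and only if the `G`-comodulus
is the square of the pivot. -/
theorem unibalanced_iff_comodulus_eq_pivot_sq
    {k G : Type} [Field k] [Group G] {H : G → Type}
    [∀ γ : G, Ring (H γ)] [∀ γ : G, Algebra k (H γ)] [∀ γ : G, FiniteDimensional k (H γ)]
    (D : HopfGCoalgebra k G H) (g : ∀ γ : G, (H γ)ˣ) (hpiv : D.IsPivot g)
    (huni : D.IsUnimodular)
    (μ : ∀ γ : G, H γ →ₗ[k] k) (hμ : D.IsRightIntegral μ) (hμ0 : ∀ γ : G, μ γ ≠ 0)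
    (a : ∀ γ : G, (H γ)ˣ) (ha : D.IsComodulus μ a) :
    (∀ (γ : G) (x : H γ),
        μ γ ((g γ : H γ) * x) = μ γ ((a γ : H γ) * (((g γ)⁻¹ : (H γ)ˣ) * x)))
      ↔ ∀ γ : G, (a γ : H γ) = (g γ : H γ) ^ 2 := by
  constructor
  · intro hbal γ
    have hinv : ∀ (δ : G) (y : H δ), μ δ (((a * g⁻¹ * g⁻¹) δ : H δ) * y) = μ δ y := by
      intro δ y
      simpa [mul_assoc] using (hbal δ (((g δ)⁻¹ : (H δ)ˣ) * y)).symm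
    have hgrp := (ha.isGrouplike.mul hpiv.isGrouplike.inv).mul hpiv.isGrouplike.inv
    have hd : a γ * (g γ)⁻¹ * (g γ)⁻¹ = 1 := hμ.grouplike_eq_one hgrp hinv (hμ0 _)
    rw [mul_assoc, ← mul_inv_rev, mul_inv_eq_one] at hd
    rw [hd, Units.val_mul, sq]
  · intro h γ x
    rw [h γ, sq, mul_assoc, Units.mul_inv_cancel_left]
end

section
/- Let H be a Hopf G-coalgebra over a field k in which every antipode map S_α : H_α → H_{α⁻¹} is bijective, and let α, β ∈ G. Regard H_α ⊗_k H_{αβ} as a left H_{αβ}-module by left multiplication on the second tensor factor (h·(m⊗x) = m⊗hx), and regard H_α ⊗_k H_β as a left H_{αβ}-module via Δ_{α,β}. Then the k-linear map φ^l_{α,β} : H_α ⊗ H_{αβ} → H_α ⊗ H_β, m ⊗ h ↦ h_{(1)}m ⊗ h_{(2)} (where Δ_{α,β}(h) = h_{(1)}⊗h_{(2)}), is an isomorphism of H_{αβ}-modules, with inverse ψ^l_{α,β} : H_α ⊗ H_β → H_α ⊗ H_{αβ}, x ⊗ y ↦ S_α⁻¹(y_{(1)})x ⊗ y_{(2)},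 where Δ_{α⁻¹,αβ}(y) = y_{(1)} ⊗ y_{(2)} (using H_β = H_{α⁻¹(αβ)}) and S_α⁻¹ : H_{α⁻¹} → H_α denotes the inverse of the antipode S_α. -/
open scoped TensorProduct

/-!
Both `φ` and `ψ` commute with right multiplication by `m ⊗ 1`, `m ∈ H_α`, so it suffices to show
`φ(ψ(1 ⊗ y)) = 1 ⊗ y` and `ψ(Δ_{α,β} h) = 1 ⊗ h`. By coassociativity each of these contracts the
first two legs of a threefold coproduct with a map `F` such that `F ∘ Δ = ε · 1`, namely
`y₍₂₎ S⁻¹(y₍₁₎) = ε(y) 1` and `S⁻¹(u₍₂₎) u₍₁₎ = ε(u) 1`. Applying the injective map `S_α` turns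
these into the antipode axioms, once `S_α` is known to be anti-multiplicative, which is the usual
convolution argument with the grading kept track of.
-/

section TensorAlgebra

variable {R : Type*} [CommSemiring R] {M C A : Type*} [AddCommMonoid M] [Module R M]
  [Semiring A] [Algebra R A] [Semiring C] [Algebra R C]

theorem LinearMap.rTensor_mulRight_apply (a : A) (t : A ⊗[R] C) :
    (LinearMap.mulRight R a).rTensor C t = t * (a ⊗ₜ 1) := by
  rw [← LinearMap.mulRight_apply (R := R), LinearMap.mulRight_tmul, LinearMap.mulRight_one]
  rfl

theorem LinearMap.rTensor_smulRight_one_apply {N : Type*} [AddCommMonoid N] [Module R N]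
    (e : M →ₗ[R] R) (t : M ⊗[R] N) :
    (e.smulRight (1 : A)).rTensor N t = 1 ⊗ₜ TensorProduct.lid R N (e.rTensor N t) := by
  induction t with
  | zero => simp
  | tmul m n => simp [TensorProduct.smul_tmul]
  | add x y hx hy => simp [hx, hy, TensorProduct.tmul_add]

theorem LinearMap.mul'_lTensor_tmul_one_mul (f : C →ₗ[R] A) (a : A) (t : A ⊗[R] C) :
    LinearMap.mul' R A (f.lTensor A ((a ⊗ₜ 1) * t)) = a * LinearMap.mul' R A (f.lTensor A t) := by
  induction t with
  | zero => simp
  | tmul x y => simp [mul_assoc]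
  | add x y hx hy => simp [mul_add, hx, hy]

variable (f : M →ₗ[R] A)

theorem LinearMap.rTensor_mul'_rTensor_assoc_symm_tmul (m : M) (t : A ⊗[R] C) :
    (LinearMap.mul' R A ∘ₗ f.rTensor A).rTensor C ((TensorProduct.assoc R M A C).symm (m ⊗ₜ t))
      = (f m ⊗ₜ 1) * t := by
  induction t with
  | zero => simp
  | tmul a c => simp
  | add x y hx hy => simp [TensorProduct.tmul_add, mul_add, hx, hy]

theorem LinearMap.rTensor_mul'_comm_rTensor_assoc_symm_tmul (m : M) (t : A ⊗[R] C) :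
    (LinearMap.mul' R A ∘ₗ (TensorProduct.comm R A A).toLinearMap ∘ₗ f.rTensor A).rTensor C
        ((TensorProduct.assoc R M A C).symm (m ⊗ₜ t))
      = t * (f m ⊗ₜ 1) := by
  induction t with
  | zero => simp
  | tmul a c => simp
  | add x y hx hy => simp [TensorProduct.tmul_add, add_mul, hx, hy]

theorem LinearMap.rTensor_mul'_comm_lTensor_assoc_symm_tmul (a : A) (t : M ⊗[R] C) :
    (LinearMap.mul' R A ∘ₗ (TensorProduct.comm R A A).toLinearMap ∘ₗ f.lTensor A).rTensor C
        ((TensorProduct.assoc R A M C).symm (a ⊗ₜ t))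
      = (LinearMap.mulRight R a ∘ₗ f).rTensor C t := by
  induction t with
  | zero => simp
  | tmul m c => simp
  | add x y hx hy => simp [TensorProduct.tmul_add, hx, hy]

end TensorAlgebra

section CastAlg

variable {k G : Type} [CommSemiring k] {H : G → Type}
  [∀ γ : G, Ring (H γ)] [∀ γ : G, Algebra k (H γ)]

@[simp]
theorem castAlg_self {γ : G} (h : γ = γ) (x : H γ) : castAlg k h x = x := rfl

@[simp]
theorem castAlg_castAlg_s7 {a b c : G} (h₁ : a = b) (h₂ : b = c) (x : H a) :
    castAlg k h₂ (castAlg k h₁ x) = castAlg k (h₁.trans h₂) x := by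
  subst h₁ h₂
  rfl

end CastAlg

namespace HopfGCoalgebra

variable {k G : Type} [Field k] [Group G] {H : G → Type}
  [∀ γ : G, Ring (H γ)] [∀ γ : G, Algebra k (H γ)] (D : HopfGCoalgebra k G H)

theorem Δ_castAlg {a a' b b' : G} (ha : a = a') (hb : b = b') (h : a * b = a' * b')
    (x : H (a * b)) :
    D.Δ a' b' (castAlg k h x)
      = TensorProduct.map (castAlg k ha).toLinearMap (castAlg k hb).toLinearMap (D.Δ a b x) := by
  subst ha hb
  exact (LinearMap.congr_fun TensorProduct.map_id _).symm

theorem counit_left_of_eq_one {u : G} (hu : u = 1) (c : G) (hc : u * c = c) (x : H (u * c)) :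
    TensorProduct.lid k (H c)
      ((D.ε.toLinearMap ∘ₗ (castAlg k hu).toLinearMap).rTensor (H c) (D.Δ u c x))
      = castAlg k hc x := by
  subst hu
  exact D.counit_left c x

theorem counit_right_of_eq_one {e : G} (he : e = 1) (a : G) (ha : a * e = a) {M : Type*}
    [AddCommMonoid M] [Module k M] (g : H a →ₗ[k] M) (x : H (a * e)) :
    TensorProduct.rid k M
      (TensorProduct.map g (D.ε.toLinearMap ∘ₗ (castAlg k he).toLinearMap) (D.Δ a e x))
      = g (castAlg k ha x) := by
  subst he
  have hg : TensorProduct.rid k M ∘ₗ TensorProduct.map g D.ε.toLinearMap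
      = g ∘ₗ TensorProduct.rid k (H a) ∘ₗ D.ε.toLinearMap.lTensor (H a) := by
    ext m h
    simp
  rw [← D.counit_right a x]
  exact LinearMap.congr_fun hg _

theorem antipode_left' (γ : G) (w : H (γ * γ⁻¹)) :
    LinearMap.mul' k (H γ⁻¹) ((D.S γ).rTensor (H γ⁻¹) (D.Δ γ γ⁻¹ w))
      = D.ε (castAlg k (mul_inv_cancel γ) w) • 1 := by
  -- the axiom at `γ⁻¹` speaks about `γ⁻¹⁻¹`, which is only propositionally equal to `γ`
  have transport : ∀ {a b : G} (ha : a = γ) (hb : b = γ⁻¹) (h : a⁻¹ = b) (hab : a * b = 1),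
      (∀ v : H (a * b), LinearMap.mul' k (H b)
          (((castAlg k h).toLinearMap ∘ₗ D.S a).rTensor (H b) (D.Δ a b v))
        = D.ε (castAlg k hab v) • 1) →
      LinearMap.mul' k (H γ⁻¹) ((D.S γ).rTensor (H γ⁻¹) (D.Δ γ γ⁻¹ w))
        = D.ε (castAlg k (mul_inv_cancel γ) w) • 1 := by
    intro a b ha hb
    subst ha hb
    intro _ _ hS
    exact hS w
  exact transport (inv_inv γ) rfl _ _ (D.antipode_left γ⁻¹)

theorem antipode_right' (γ : G) (v : H (γ⁻¹ * γ)) :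
    LinearMap.mul' k (H γ⁻¹) ((D.S γ).lTensor (H γ⁻¹) (D.Δ γ⁻¹ γ v))
      = D.ε (castAlg k (inv_mul_cancel γ) v) • 1 := by
  have transport : ∀ {a b : G} (ha : a = γ⁻¹) (hb : b = γ) (h : b⁻¹ = a) (hab : a * b = 1),
      (∀ u : H (a * b), LinearMap.mul' k (H a)
          (((castAlg k h).toLinearMap ∘ₗ D.S b).lTensor (H a) (D.Δ a b u))
        = D.ε (castAlg k hab u) • 1) →
      LinearMap.mul' k (H γ⁻¹) ((D.S γ).lTensor (H γ⁻¹) (D.Δ γ⁻¹ γ v))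
        = D.ε (castAlg k (inv_mul_cancel γ) v) • 1 := by
    intro a b ha hb
    subst ha hb
    intro _ _ hS
    exact hS v
  exact transport rfl (inv_inv γ) _ _ (D.antipode_right γ⁻¹)

theorem S_one (γ : G) : D.S γ 1 = 1 := by
  simpa [Algebra.TensorProduct.one_def] using D.antipode_left' γ 1

/-- Coassociativity turns `F(x₍₁₎ ⊗ x₍₂₎) ⊗ x₍₃₎` into `F(Δ x₍₁₎) ⊗ x₍₂₎ = ε(x₍₁₎) ⊗ x₍₂₎`. -/
theorem rTensor_assoc_symm_Δ_Δ {a b : G} (c : G) (hab : a * b = 1) (hc : a * (b * c) = c)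
    {E : Type*} [Ring E] [Algebra k E] (F : H a ⊗[k] H b →ₗ[k] E)
    (hF : ∀ v, F (D.Δ a b v) = D.ε (castAlg k hab v) • 1) (x : H (a * (b * c))) :
    F.rTensor (H c) ((TensorProduct.assoc k (H a) (H b) (H c)).symm
        ((D.Δ b c).toLinearMap.lTensor (H a) (D.Δ a (b * c) x)))
      = 1 ⊗ₜ castAlg k hc x := by
  have hco : (D.Δ a b).toLinearMap.rTensor (H c)
        (D.Δ (a * b) c (castAlg k (mul_assoc a b c).symm x))
      = (TensorProduct.assoc k (H a) (H b) (H c)).symm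
          ((D.Δ b c).toLinearMap.lTensor (H a) (D.Δ a (b * c) x)) := by
    have h := D.coassoc a b c (castAlg k (mul_assoc a b c).symm x)
    rw [castAlg_castAlg_s7, castAlg_self] at h
    exact h
  have hFΔ : F ∘ₗ (D.Δ a b).toLinearMap
      = (D.ε.toLinearMap ∘ₗ (castAlg k hab).toLinearMap).smulRight 1 := by
    ext v
    exact hF v
  rw [← hco, ← LinearMap.rTensor_comp_apply, hFΔ, LinearMap.rTensor_smulRight_one_apply,
    D.counit_left_of_eq_one hab c (by rw [hab, one_mul]), castAlg_castAlg_s7]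

section AntiMultiplicative

variable (γ : G)

/-- `ε(v) S(x) = S(x₍₁₎) ε(x₍₂₎ v) = S(x₍₁₎) x₍₂₎ v₍₁₎ S(x₍₃₎ v₍₂₎) = v₍₁₎ S(x v₍₂₎)`. -/
theorem mul'_lTensor_S_one_tmul_mul_Δ (x : H γ) (v : H (γ⁻¹ * γ)) :
    LinearMap.mul' k (H γ⁻¹) ((D.S γ).lTensor (H γ⁻¹) ((1 ⊗ₜ x) * D.Δ γ⁻¹ γ v))
      = D.ε (castAlg k (inv_mul_cancel γ) v) • D.S γ x := by
  set σ := LinearMap.mul' k (H γ⁻¹) ∘ₗ (D.S γ).rTensor (H γ⁻¹)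
  set x' := castAlg k (mul_inv_cancel_left γ γ).symm x
  set Ξ := LinearMap.mul' k (H γ⁻¹) ∘ₗ (D.S γ).lTensor (H γ⁻¹)
    ∘ₗ LinearMap.mulRight k (D.Δ γ⁻¹ γ v) ∘ₗ σ.rTensor (H γ)
    ∘ₗ (TensorProduct.assoc k _ _ _).symm.toLinearMap ∘ₗ (D.Δ γ⁻¹ γ).toLinearMap.lTensor (H γ)
  have hx : σ.rTensor (H γ) ((TensorProduct.assoc k _ _ _).symm
      ((D.Δ γ⁻¹ γ).toLinearMap.lTensor (H γ) (D.Δ γ (γ⁻¹ * γ) x'))) = 1 ⊗ₜ x := by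
    rw [D.rTensor_assoc_symm_Δ_Δ γ (mul_inv_cancel γ) (mul_inv_cancel_left γ γ) σ
      (D.antipode_left' γ), castAlg_castAlg_s7, castAlg_self]
  have hΞ : Ξ = TensorProduct.rid k (H γ⁻¹) ∘ₗ TensorProduct.map
      (D.ε (castAlg k (inv_mul_cancel γ) v) • D.S γ)
      (D.ε.toLinearMap ∘ₗ (castAlg k (inv_mul_cancel γ)).toLinearMap) := by
    refine TensorProduct.ext' fun a w => ?_
    simp only [Ξ, σ, LinearMap.comp_apply, LinearEquiv.coe_coe, LinearMap.lTensor_tmul,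
      AlgHom.toLinearMap_apply, LinearMap.mulRight_apply,
      LinearMap.rTensor_mul'_rTensor_assoc_symm_tmul, mul_assoc, ← map_mul,
      LinearMap.mul'_lTensor_tmul_one_mul, antipode_right']
    rw [TensorProduct.map_tmul, TensorProduct.rid_tmul, map_mul, map_mul, mul_smul_one,
      LinearMap.comp_apply, LinearMap.smul_apply, smul_smul]
    rfl
  calc _ = Ξ (D.Δ γ (γ⁻¹ * γ) x') := by
        simp only [Ξ, LinearMap.comp_apply, LinearEquiv.coe_coe]
        rw [hx]
        rfl
    _ = _ := by
      rw [hΞ, LinearMap.comp_apply, LinearEquiv.coe_coe, D.counit_right_of_eq_one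
        (inv_mul_cancel γ) γ (mul_inv_cancel_left γ γ), castAlg_castAlg_s7, castAlg_self,
        LinearMap.smul_apply]

/-- `S(y) S(x) = S(y₍₁₎) ε(y₍₂₎) S(x) = S(y₍₁₎) y₍₂₎ S(x y₍₃₎) = S(x y)`. -/
theorem S_mul (x y : H γ) : D.S γ (x * y) = D.S γ y * D.S γ x := by
  set σ := LinearMap.mul' k (H γ⁻¹) ∘ₗ (D.S γ).rTensor (H γ⁻¹)
  set y' := castAlg k (mul_inv_cancel_left γ γ).symm y
  set Ψ := LinearMap.mul' k (H γ⁻¹) ∘ₗ (D.S γ).lTensor (H γ⁻¹)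
    ∘ₗ LinearMap.mulLeft k (1 ⊗ₜ x) ∘ₗ σ.rTensor (H γ)
    ∘ₗ (TensorProduct.assoc k _ _ _).symm.toLinearMap ∘ₗ (D.Δ γ⁻¹ γ).toLinearMap.lTensor (H γ)
  have hy : σ.rTensor (H γ) ((TensorProduct.assoc k _ _ _).symm
      ((D.Δ γ⁻¹ γ).toLinearMap.lTensor (H γ) (D.Δ γ (γ⁻¹ * γ) y'))) = 1 ⊗ₜ y := by
    rw [D.rTensor_assoc_symm_Δ_Δ γ (mul_inv_cancel γ) (mul_inv_cancel_left γ γ) σ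
      (D.antipode_left' γ), castAlg_castAlg_s7, castAlg_self]
  have hΨ : Ψ = TensorProduct.rid k (H γ⁻¹) ∘ₗ TensorProduct.map
      (LinearMap.mulRight k (D.S γ x) ∘ₗ D.S γ)
      (D.ε.toLinearMap ∘ₗ (castAlg k (inv_mul_cancel γ)).toLinearMap) := by
    refine TensorProduct.ext' fun a w => ?_
    have hcomm : (1 ⊗ₜ[k] x) * (D.S γ a ⊗ₜ[k] (1 : H γ)) = (D.S γ a ⊗ₜ 1) * (1 ⊗ₜ x) := by
      simp only [Algebra.TensorProduct.tmul_mul_tmul, one_mul, mul_one]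
    simp only [Ψ, σ, LinearMap.comp_apply, LinearEquiv.coe_coe, LinearMap.lTensor_tmul,
      AlgHom.toLinearMap_apply, LinearMap.mulLeft_apply,
      LinearMap.rTensor_mul'_rTensor_assoc_symm_tmul, ← mul_assoc, hcomm]
    rw [mul_assoc, LinearMap.mul'_lTensor_tmul_one_mul, mul'_lTensor_S_one_tmul_mul_Δ,
      TensorProduct.map_tmul, TensorProduct.rid_tmul, mul_smul_comm]
    rfl
  calc D.S γ (x * y)
      = LinearMap.mul' k (H γ⁻¹) ((D.S γ).lTensor (H γ⁻¹) ((1 ⊗ₜ x) * (1 ⊗ₜ y))) := by simp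
    _ = Ψ (D.Δ γ (γ⁻¹ * γ) y') := by
        simp only [Ψ, LinearMap.comp_apply, LinearEquiv.coe_coe, LinearMap.mulLeft_apply]
        rw [hy]
    _ = D.S γ y * D.S γ x := by
      rw [hΨ, LinearMap.comp_apply, LinearEquiv.coe_coe, D.counit_right_of_eq_one
        (inv_mul_cancel γ) γ (mul_inv_cancel_left γ γ), castAlg_castAlg_s7, castAlg_self,
        LinearMap.comp_apply, LinearMap.mulRight_apply]

end AntiMultiplicative

section InverseAntipode

variable {α : G} {T : H α⁻¹ →ₗ[k] H α}

theorem antipode_inv_right (hT : ∀ y, D.S α (T y) = y) (hS : Function.Injective (D.S α))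
    (v : H (α⁻¹ * α)) :
    (LinearMap.mul' k (H α) ∘ₗ (TensorProduct.comm k (H α) (H α)).toLinearMap
        ∘ₗ T.rTensor (H α)) (D.Δ α⁻¹ α v)
      = D.ε (castAlg k (inv_mul_cancel α) v) • 1 := by
  have hST : D.S α ∘ₗ LinearMap.mul' k (H α) ∘ₗ (TensorProduct.comm k (H α) (H α)).toLinearMap
        ∘ₗ T.rTensor (H α) = LinearMap.mul' k (H α⁻¹) ∘ₗ (D.S α).lTensor (H α⁻¹) :=
    TensorProduct.ext' fun a b => by simp [S_mul, hT]
  apply hS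
  rw [map_smul, S_one, ← D.antipode_right' α v]
  exact LinearMap.congr_fun hST _

theorem antipode_inv_left (hT : ∀ y, D.S α (T y) = y) (hS : Function.Injective (D.S α))
    (u : H (α * α⁻¹)) :
    (LinearMap.mul' k (H α) ∘ₗ (TensorProduct.comm k (H α) (H α)).toLinearMap
        ∘ₗ T.lTensor (H α)) (D.Δ α α⁻¹ u)
      = D.ε (castAlg k (mul_inv_cancel α) u) • 1 := by
  have hST : D.S α ∘ₗ LinearMap.mul' k (H α) ∘ₗ (TensorProduct.comm k (H α) (H α)).toLinearMap
        ∘ₗ T.lTensor (H α) = LinearMap.mul' k (H α⁻¹) ∘ₗ (D.S α).rTensor (H α⁻¹) :=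
    TensorProduct.ext' fun a b => by simp [S_mul, hT]
  apply hS
  rw [map_smul, S_one, ← D.antipode_left' α u]
  exact LinearMap.congr_fun hST _

end InverseAntipode

section LeftIsomorphism

variable {α β : G} {T : H α⁻¹ →ₗ[k] H α} {φ : H α ⊗[k] H (α * β) →ₗ[k] H α ⊗[k] H β}
  {ψ : H α ⊗[k] H β →ₗ[k] H α ⊗[k] H (α * β)}

theorem phi_mul_tmul_one (hφ : ∀ m h, φ (m ⊗ₜ h) = D.Δ α β h * (m ⊗ₜ 1)) (x : H α)
    (t : H α ⊗[k] H (α * β)) : φ (t * (x ⊗ₜ 1)) = φ t * (x ⊗ₜ 1) := by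
  induction t with
  | zero => simp
  | tmul m h => simp [hφ, mul_assoc]
  | add t t' ht ht' => simp [add_mul, ht, ht']

theorem psi_mul_tmul_one
    (hψ : ∀ x y, ψ (x ⊗ₜ y) = (LinearMap.mulRight k x ∘ₗ T).rTensor (H (α * β))
      (D.Δ α⁻¹ (α * β) (castAlg k (inv_mul_cancel_left α β).symm y)))
    (m : H α) (t : H α ⊗[k] H β) : ψ (t * (m ⊗ₜ 1)) = ψ t * (m ⊗ₜ 1) := by
  induction t with
  | zero => simp
  | tmul x y =>
    rw [Algebra.TensorProduct.tmul_mul_tmul, mul_one, hψ, hψ, ← LinearMap.rTensor_mulRight_apply,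
      ← LinearMap.rTensor_comp_apply, ← LinearMap.comp_assoc, ← LinearMap.mulRight_mul]
  | add t t' ht ht' => simp [add_mul, ht, ht']

theorem phi_comp_psi (hT : ∀ y, D.S α (T y) = y) (hS : Function.Injective (D.S α))
    (hφ : ∀ m h, φ (m ⊗ₜ h) = D.Δ α β h * (m ⊗ₜ 1))
    (hψ : ∀ x y, ψ (x ⊗ₜ y) = (LinearMap.mulRight k x ∘ₗ T).rTensor (H (α * β))
      (D.Δ α⁻¹ (α * β) (castAlg k (inv_mul_cancel_left α β).symm y))) :
    φ ∘ₗ ψ = LinearMap.id := by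
  set F := LinearMap.mul' k (H α) ∘ₗ (TensorProduct.comm k (H α) (H α)).toLinearMap
    ∘ₗ T.rTensor (H α)
  have hφT : φ ∘ₗ T.rTensor (H (α * β)) = F.rTensor (H β)
      ∘ₗ (TensorProduct.assoc k _ _ _).symm.toLinearMap ∘ₗ (D.Δ α β).toLinearMap.lTensor _ :=
    TensorProduct.ext' fun a h => by
      simp [F, hφ, LinearMap.rTensor_mul'_comm_rTensor_assoc_symm_tmul]
  refine TensorProduct.ext' fun x y => ?_
  set y' := castAlg k (inv_mul_cancel_left α β).symm y
  calc φ (ψ (x ⊗ₜ y)) = φ (T.rTensor _ (D.Δ α⁻¹ (α * β) y') * (x ⊗ₜ 1)) := by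
        rw [hψ, LinearMap.rTensor_comp_apply, LinearMap.rTensor_mulRight_apply]
    _ = F.rTensor (H β) ((TensorProduct.assoc k _ _ _).symm
          ((D.Δ α β).toLinearMap.lTensor _ (D.Δ α⁻¹ (α * β) y'))) * (x ⊗ₜ 1) := by
        rw [D.phi_mul_tmul_one hφ, ← LinearMap.comp_apply, hφT]
        rfl
    _ = x ⊗ₜ y := by
        rw [D.rTensor_assoc_symm_Δ_Δ β (inv_mul_cancel α) (inv_mul_cancel_left α β) F
          (D.antipode_inv_right hT hS)]
        simp [y']

theorem psi_comp_phi (hT : ∀ y, D.S α (T y) = y) (hS : Function.Injective (D.S α))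
    (hφ : ∀ m h, φ (m ⊗ₜ h) = D.Δ α β h * (m ⊗ₜ 1))
    (hψ : ∀ x y, ψ (x ⊗ₜ y) = (LinearMap.mulRight k x ∘ₗ T).rTensor (H (α * β))
      (D.Δ α⁻¹ (α * β) (castAlg k (inv_mul_cancel_left α β).symm y))) :
    ψ ∘ₗ φ = LinearMap.id := by
  set F := LinearMap.mul' k (H α) ∘ₗ (TensorProduct.comm k (H α) (H α)).toLinearMap
    ∘ₗ T.lTensor (H α)
  have hb : β = α⁻¹ * (α * β) := (inv_mul_cancel_left α β).symm
  have hψF : ψ = F.rTensor (H (α * β)) ∘ₗ (TensorProduct.assoc k _ _ _).symm.toLinearMap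
      ∘ₗ ((D.Δ α⁻¹ (α * β)).toLinearMap ∘ₗ (castAlg k hb).toLinearMap).lTensor _ :=
    TensorProduct.ext' fun a h => by
      simp [F, hψ, LinearMap.rTensor_mul'_comm_lTensor_assoc_symm_tmul]
  have hψΔ (h : H (α * β)) : ψ (D.Δ α β h) = 1 ⊗ₜ h := by
    have hh : α * β = α * (α⁻¹ * (α * β)) := by rw [← hb]
    have hΔ : (castAlg k hb).toLinearMap.lTensor (H α) (D.Δ α β h) = D.Δ α _ (castAlg k hh h) :=
      (D.Δ_castAlg rfl hb hh h).symm
    rw [hψF, LinearMap.comp_apply, LinearMap.comp_apply, LinearMap.lTensor_comp_apply, hΔ,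
      LinearEquiv.coe_coe,
      D.rTensor_assoc_symm_Δ_Δ (α * β) (mul_inv_cancel α) (mul_inv_cancel_left α (α * β)) F
        (D.antipode_inv_left hT hS), castAlg_castAlg_s7, castAlg_self]
  refine TensorProduct.ext' fun m h => ?_
  rw [LinearMap.comp_apply, hφ, D.psi_mul_tmul_one hψ, hψΔ, LinearMap.id_apply,
    Algebra.TensorProduct.tmul_mul_tmul, one_mul, mul_one]

end LeftIsomorphism

end HopfGCoalgebra

open HopfGCoalgebra in
/-- The map `φ^l_{α,β} : H_α ⊗ H_{αβ} → H_α ⊗ H_β, m ⊗ h ↦ h₍₁₎m ⊗ h₍₂₎` is an isomorphism of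
`H_{αβ}`-modules (where `H_{αβ}` acts on the source by left multiplication on the second factor
and on the target through `Δ_{α,β}`), with inverse
`ψ^l_{α,β} : x ⊗ y ↦ S_α⁻¹(y₍₁₎)x ⊗ y₍₂₎`, `S_α⁻¹` being the inverse of the antipode `S_α`. -/
theorem phi_left_isom_of_modules
    {k G : Type} [Field k] [Group G] {H : G → Type}
    [∀ γ : G, Ring (H γ)] [∀ γ : G, Algebra k (H γ)]
    (D : HopfGCoalgebra k G H)
    (Sinv : ∀ γ : G, H γ⁻¹ →ₗ[k] H γ)
    (hSinv : ∀ (γ : G) (x : H γ), Sinv γ (D.S γ x) = x)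
    (hSinv' : ∀ (γ : G) (y : H γ⁻¹), D.S γ (Sinv γ y) = y)
    (α β : G)
    (φ : (H α ⊗[k] H (α * β)) →ₗ[k] (H α ⊗[k] H β))
    (ψ : (H α ⊗[k] H β) →ₗ[k] (H α ⊗[k] H (α * β)))
    (hφ : ∀ (m : H α) (h : H (α * β)),
      φ (m ⊗ₜ[k] h) = D.Δ α β h * (m ⊗ₜ[k] (1 : H β)))
    (hψ : ∀ (x : H α) (y : H β),
      ψ (x ⊗ₜ[k] y)
        = (TensorProduct.map (LinearMap.mulRight k x ∘ₗ Sinv α) LinearMap.id)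
          (D.Δ α⁻¹ (α * β) (castAlg k (inv_mul_cancel_left α β).symm y))) :
    (∀ (h : H (α * β)) (z : H α ⊗[k] H (α * β)),
        φ ((TensorProduct.map LinearMap.id (LinearMap.mulLeft k h)) z) = D.Δ α β h * φ z)
    ∧ φ.comp ψ = LinearMap.id ∧ ψ.comp φ = LinearMap.id := by
  have hS : Function.Injective (D.S α) := Function.LeftInverse.injective (hSinv α)
  refine ⟨fun h z => ?_, D.phi_comp_psi (hSinv' α) hS hφ hψ, D.psi_comp_phi (hSinv' α) hS hφ hψ⟩
  induction z with
  | zero => simp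
  | tmul m x => simp [hφ, mul_assoc]
  | add z z' hz hz' => simp [mul_add, hz, hz']
end

section
/- Let r ≥ 2 be an integer, and for x ∈ ℂ set q^x := exp(iπx/r) and {x} := q^x − q^{−x}. Then for every α ∈ ℂ with α ∉ ℤ one has ∏_{k=1}^{r−1} {k}/{α+r−k} = r·{α}/{rα}. -/
/-!
Write `q^x = exp(iπx/r)`, so that `{x} = q^(-x) (q^(2x) - 1)` and `ζ = q^2` is a primitive
`r`-th root of unity. As `q^r = -1`, `{α + r - k} = {k - α}`, and the `k`-th factor becomes
`q^α (1 - ζ^k) / (w - ζ^k)` with `w = q^(2α)`. Evaluating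
`∏_{k=1}^{r-1} (z - ζ^k) = 1 + z + ⋯ + z^(r-1)` at `z = 1` and `z = w` gives `r` and
`(w^r - 1) / (w - 1)`, which is what `r {α} / {rα}` reduces to; `w^r = exp(2πiα) ≠ 1`
because `α ∉ ℤ`.
-/

/-- `{x} := q^x - q^{-x}` where `q^x := exp(iπx/r)`. -/
noncomputable def qbr (r : ℕ) (x : ℂ) : ℂ :=
  Complex.exp (Real.pi * Complex.I * x / r) - Complex.exp (-(Real.pi * Complex.I * x / r))

open Complex Finset Polynomial
open scoped Real

lemma IsPrimitiveRoot.prod_sub_pow_eq_geom_sum {R : Type*} [CommRing R] [IsDomain R] {n : ℕ}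
    {μ : R} (hμ : IsPrimitiveRoot μ (n + 1)) (z : R) :
    ∏ k ∈ range n, (z - μ ^ (k + 1)) = ∑ i ∈ range (n + 1), z ^ i := by
  have h := X_pow_sub_C_eq_prod hμ n.zero_lt_succ (one_pow (n + 1))
  rw [C_1, ← mul_geom_sum, prod_range_succ', pow_zero, mul_one, mul_comm, eq_comm] at h
  simpa [eval_prod, eval_geom_sum] using
    congrArg (eval z) (mul_right_cancel₀ (X_sub_C_ne_zero 1) h)

lemma Finset.prod_Icc_one_eq_prod_range {M : Type*} [CommMonoid M] (f : ℕ → M) (n : ℕ) :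
    ∏ k ∈ Icc 1 n, f k = ∏ k ∈ range n, f (k + 1) := by
  rw [range_eq_Ico, prod_Ico_add' f 0 n 1, zero_add, Ico_add_one_right_eq_Icc]

lemma Complex.exp_two_pi_mul_I_mul_ne_one {x : ℂ} (hx : ∀ n : ℤ, x ≠ n) :
    exp (2 * π * I * x) ≠ 1 := by
  rw [Ne, exp_eq_one_iff]
  rintro ⟨n, hn⟩
  apply hx n
  have : (2 * π * I : ℂ) ≠ 0 := by simp [Real.pi_ne_zero]
  exact mul_left_cancel₀ this (by rw [hn]; ring)

noncomputable def qexp (r : ℕ) (x : ℂ) : ℂ := exp (π * I * x / r)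

section qexp

variable {r : ℕ}

lemma qexp_add (x y : ℂ) : qexp r (x + y) = qexp r x * qexp r y := by
  rw [qexp, qexp, qexp, ← exp_add]; ring_nf

@[simp]
lemma qexp_zero : qexp r 0 = 1 := by simp [qexp]

lemma qexp_ne_zero (x : ℂ) : qexp r x ≠ 0 := exp_ne_zero _

lemma qexp_neg (x : ℂ) : qexp r (-x) = (qexp r x)⁻¹ := by
  rw [qexp, qexp, ← exp_neg]; ring_nf

lemma qexp_natCast_mul (n : ℕ) (x : ℂ) : qexp r (n * x) = qexp r x ^ n := by
  rw [qexp, qexp, ← exp_nat_mul]; ring_nf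

lemma qexp_self (hr : r ≠ 0) : qexp r r = -1 := by
  rw [qexp, mul_div_assoc, div_self (Nat.cast_ne_zero.mpr hr), mul_one, exp_pi_mul_I]

lemma qexp_two_mul_pow_self (hr : r ≠ 0) (x : ℂ) :
    qexp r (2 * x) ^ r = exp (2 * π * I * x) := by
  rw [← qexp_natCast_mul, qexp]
  field_simp

lemma isPrimitiveRoot_qexp_two (hr : r ≠ 0) : IsPrimitiveRoot (qexp r 2) r := by
  convert isPrimitiveRoot_exp r hr using 2
  rw [qexp]; ring_nf

lemma qbr_eq_qexp_sub (x : ℂ) : qbr r x = qexp r x - qexp r (-x) := by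
  simp only [qbr, qexp, mul_neg, neg_div]

lemma qbr_sub (a b : ℂ) :
    qbr r (a - b) = qexp r (-(a + b)) * (qexp r (2 * a) - qexp r (2 * b)) := by
  rw [qbr_eq_qexp_sub, mul_sub, ← qexp_add, ← qexp_add]; ring_nf

lemma qbr_eq_mul (x : ℂ) : qbr r x = qexp r (-x) * (qexp r (2 * x) - 1) := by
  simpa using qbr_sub (r := r) x 0

lemma qbr_neg (x : ℂ) : qbr r (-x) = -qbr r x := by
  rw [qbr_eq_qexp_sub, qbr_eq_qexp_sub, neg_neg, neg_sub]

lemma qbr_add_self (hr : r ≠ 0) (x : ℂ) : qbr r (x + r) = -qbr r x := by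
  rw [qbr_eq_qexp_sub, qbr_eq_qexp_sub, neg_add, qexp_add, qexp_add, qexp_neg (r : ℂ),
    qexp_self hr]
  ring

lemma qbr_div_qbr_sub (a α : ℂ) : qbr r a / qbr r (a - α)
    = qexp r α * ((1 - qexp r (2 * a)) / (qexp r (2 * α) - qexp r (2 * a))) := by
  rw [qbr_eq_mul, qbr_sub, show -a = α + -(a + α) by ring,
    qexp_add, mul_assoc, mul_div_assoc, mul_div_mul_left _ _ (qexp_ne_zero _),
    ← neg_div_neg_eq, neg_sub, neg_sub]

lemma qbr_div_qbr_natCast_mul {n : ℕ} {α : ℂ} (h : qexp r (2 * α) ^ (n + 1) ≠ 1) :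
    qbr r α / qbr r ((n + 1 : ℕ) * α)
      = qexp r α ^ n / ∑ i ∈ range (n + 1), qexp r (2 * α) ^ i := by
  have hw : qexp r (2 * α) - 1 ≠ 0 := fun hw ↦ h (by rw [sub_eq_zero.mp hw, one_pow])
  rw [qbr_eq_mul, qbr_eq_mul, mul_left_comm, qexp_natCast_mul, ← geom_sum_mul,
    show -α = n * α + -((n + 1 : ℕ) * α) by push_cast; ring, qexp_add, qexp_natCast_mul,
    mul_assoc (qexp r α ^ n), mul_left_comm (qexp r _),
    mul_div_mul_right _ _ (mul_ne_zero (qexp_ne_zero _) hw)]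

end qexp

theorem prod_qbr_div_qbr (r : ℕ) (hr : 2 ≤ r) (α : ℂ) (hα : ∀ n : ℤ, α ≠ (n : ℂ)) :
    ∏ k ∈ Finset.Icc 1 (r - 1), qbr r (k : ℂ) / qbr r (α + r - k)
      = (r : ℂ) * qbr r α / qbr r (r * α) := by
  obtain ⟨n, rfl⟩ : ∃ n, r = n + 1 := ⟨r - 1, by omega⟩
  have hr0 : n + 1 ≠ 0 := n.succ_ne_zero
  have hζ : IsPrimitiveRoot (qexp (n + 1) 2) (n + 1) := isPrimitiveRoot_qexp_two hr0
  have hw : qexp (n + 1) (2 * α) ^ (n + 1) ≠ 1 := by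
    rw [qexp_two_mul_pow_self hr0]
    exact exp_two_pi_mul_I_mul_ne_one hα
  have hterm (k : ℕ) :
      qbr (n + 1) (k + 1 : ℕ) / qbr (n + 1) (α + (n + 1 : ℕ) - (k + 1 : ℕ))
        = qexp (n + 1) α * ((1 - qexp (n + 1) 2 ^ (k + 1))
          / (qexp (n + 1) (2 * α) - qexp (n + 1) 2 ^ (k + 1))) := by
    rw [show α + (n + 1 : ℕ) - (k + 1 : ℕ) = α - (k + 1 : ℕ) + (n + 1 : ℕ) by ring,
      qbr_add_self hr0, ← qbr_neg, neg_sub, qbr_div_qbr_sub, ← qexp_natCast_mul,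
      mul_comm _ (2 : ℂ)]
  rw [Nat.add_sub_cancel, prod_Icc_one_eq_prod_range, prod_congr rfl fun k _ ↦ hterm k,
    prod_mul_distrib, prod_const, card_range, prod_div_distrib, hζ.prod_one_sub_pow_eq_order,
    hζ.prod_sub_pow_eq_geom_sum, mul_div_assoc, qbr_div_qbr_natCast_mul hw]
  push_cast
  ring
end

section
/- Let r ≥ 2 be an integer and q = exp(iπ/r) ∈ ℂ. Let U_q(sl2) be the ℂ-algebra with generators E, F, K, K⁻¹ and relations KK⁻¹ = K⁻¹K = 1, KEK⁻¹ = q²E, KFK⁻¹ = q⁻²F, EF − FE = (K − K⁻¹)/(q − q⁻¹), and let Ω := FE + (qK + q⁻¹K⁻¹)/(q − q⁻¹)² be its Casimir element. Then for every natural number k one has ∏_{i=0}^{k−1} (Ω − (q^{−2i−1}K + q^{2i+1}K⁻¹)/(q − q⁻¹)²) = E^k F^k in U_q(sl2). -/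
/-- Generators of the quantum group `U_q(sl2)`. -/
inductive SL2Gen : Type
  | E | F | K | Kinv

open FreeAlgebra in
/-- Defining relations of `U_q(sl2)` for a parameter `q : ℂ`. -/
inductive SL2Rel (q : ℂ) : FreeAlgebra ℂ SL2Gen → FreeAlgebra ℂ SL2Gen → Prop
  | K_Kinv : SL2Rel q (ι ℂ SL2Gen.K * ι ℂ SL2Gen.Kinv) 1
  | Kinv_K : SL2Rel q (ι ℂ SL2Gen.Kinv * ι ℂ SL2Gen.K) 1
  | K_E : SL2Rel q (ι ℂ SL2Gen.K * ι ℂ SL2Gen.E * ι ℂ SL2Gen.Kinv) (q ^ 2 • ι ℂ SL2Gen.E)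
  | K_F : SL2Rel q (ι ℂ SL2Gen.K * ι ℂ SL2Gen.F * ι ℂ SL2Gen.Kinv) ((q ^ 2)⁻¹ • ι ℂ SL2Gen.F)
  | E_F : SL2Rel q (ι ℂ SL2Gen.E * ι ℂ SL2Gen.F - ι ℂ SL2Gen.F * ι ℂ SL2Gen.E)
      ((q - q⁻¹)⁻¹ • (ι ℂ SL2Gen.K - ι ℂ SL2Gen.Kinv))

/-- `U_q(sl2)`: quotient of the free algebra by the defining relations. -/
abbrev Uq (q : ℂ) : Type := RingQuot (SL2Rel q)

namespace Uq

variable (q : ℂ)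

noncomputable def E : Uq q := RingQuot.mkAlgHom ℂ (SL2Rel q) (FreeAlgebra.ι ℂ SL2Gen.E)
noncomputable def F : Uq q := RingQuot.mkAlgHom ℂ (SL2Rel q) (FreeAlgebra.ι ℂ SL2Gen.F)
noncomputable def K : Uq q := RingQuot.mkAlgHom ℂ (SL2Rel q) (FreeAlgebra.ι ℂ SL2Gen.K)
noncomputable def Kinv : Uq q := RingQuot.mkAlgHom ℂ (SL2Rel q) (FreeAlgebra.ι ℂ SL2Gen.Kinv)

/-- The Casimir element `Ω = FE + (qK + q⁻¹K⁻¹)/(q - q⁻¹)²`. -/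
noncomputable def Ω : Uq q :=
  F q * E q + ((q - q⁻¹) ^ 2)⁻¹ • (q • K q + q⁻¹ • Kinv q)

end Uq

/-!
Write `D t := (t⁻¹ K + t K⁻¹) / (q - q⁻¹)²` (this is `cartanPart q t`), so that `Ω = FE + D q⁻¹`
and the `i`-th factor is `Ω - D q^(2i+1)`. Since `D t - D (t q²) = ((tq)⁻¹ K - tq K⁻¹) / (q - q⁻¹)`
and `F` commutes past `K^{±1}` up to `q^{∓2}`, the relation `EF - FE = (K - K⁻¹)/(q - q⁻¹)` gives
by induction `F^k (Ω - D q^(2k+1)) = E F^(k+1)`. Multiplying the factors in order then turns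
`E^k F^k` into `E^(k+1) F^(k+1)` at each step.
-/

theorem pow_mul_eq_smul_mul_pow {R A : Type*} [CommMonoid R] [Monoid A] [MulAction R A]
    [IsScalarTower R A A] [SMulCommClass R A A] {a b : A} {c : R} (h : a * b = c • (b * a))
    (n : ℕ) : a ^ n * b = c ^ n • (b * a ^ n) := by
  induction n with
  | zero => simp
  | succ n ih =>
    rw [pow_succ, mul_assoc, h, mul_smul_comm, ← mul_assoc, ih, smul_mul_assoc, smul_smul,
      mul_assoc, ← pow_succ, ← pow_succ']

namespace Uq

variable {q : ℂ}

theorem K_mul_Kinv : K q * Kinv q = 1 := by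
  simpa [K, Kinv] using RingQuot.mkAlgHom_rel ℂ (SL2Rel.K_Kinv (q := q))

theorem Kinv_mul_K : Kinv q * K q = 1 := by
  simpa [K, Kinv] using RingQuot.mkAlgHom_rel ℂ (SL2Rel.Kinv_K (q := q))

theorem K_mul_F_mul_Kinv : K q * F q * Kinv q = (q ^ 2)⁻¹ • F q := by
  simpa [K, F, Kinv] using RingQuot.mkAlgHom_rel ℂ (SL2Rel.K_F (q := q))

theorem E_mul_F_sub_F_mul_E : E q * F q - F q * E q = (q - q⁻¹)⁻¹ • (K q - Kinv q) := by
  simpa [K, E, F, Kinv] using RingQuot.mkAlgHom_rel ℂ (SL2Rel.E_F (q := q))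

theorem F_mul_K (hq : q ≠ 0) : F q * K q = q ^ 2 • (K q * F q) := by
  calc F q * K q = q ^ 2 • (K q * F q * Kinv q) * K q := by
        rw [K_mul_F_mul_Kinv, smul_smul, mul_inv_cancel₀ (pow_ne_zero 2 hq), one_smul]
    _ = q ^ 2 • (K q * F q) := by rw [smul_mul_assoc, mul_assoc, Kinv_mul_K, mul_one]

theorem F_mul_Kinv : F q * Kinv q = (q ^ 2)⁻¹ • (Kinv q * F q) := by
  calc F q * Kinv q = Kinv q * (K q * F q * Kinv q) := by
        rw [← mul_assoc, ← mul_assoc, Kinv_mul_K, one_mul]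
    _ = (q ^ 2)⁻¹ • (Kinv q * F q) := by rw [K_mul_F_mul_Kinv, mul_smul_comm]

theorem F_pow_mul_smul_K_sub_smul_Kinv (hq : q ≠ 0) (n : ℕ) :
    F q ^ n * (((q ^ 2) ^ n)⁻¹ • K q - (q ^ 2) ^ n • Kinv q) = (K q - Kinv q) * F q ^ n := by
  have hqn : (q ^ 2) ^ n ≠ 0 := pow_ne_zero _ (pow_ne_zero 2 hq)
  rw [mul_sub, mul_smul_comm, mul_smul_comm, pow_mul_eq_smul_mul_pow (F_mul_K hq),
    pow_mul_eq_smul_mul_pow F_mul_Kinv, smul_smul, smul_smul, inv_pow,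
    inv_mul_cancel₀ hqn, mul_inv_cancel₀ hqn, one_smul, one_smul, sub_mul]

variable (q) in
noncomputable def cartanPart (t : ℂ) : Uq q :=
  ((q - q⁻¹) ^ 2)⁻¹ • (t⁻¹ • K q + t • Kinv q)

theorem Ω_eq_F_mul_E_add_cartanPart : Ω q = F q * E q + cartanPart q q⁻¹ := by
  rw [Ω, cartanPart, inv_inv]

theorem cartanPart_sub_cartanPart_mul_sq (hq : q - q⁻¹ ≠ 0) {t : ℂ} (ht : t ≠ 0) :
    cartanPart q t - cartanPart q (t * q ^ 2)
      = (q - q⁻¹)⁻¹ • ((t * q)⁻¹ • K q - (t * q) • Kinv q) := by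
  have hq0 : q ≠ 0 := by rintro rfl; simp at hq
  have hq2 : q ^ 2 - 1 ≠ 0 := by contrapose! hq; field_simp; linear_combination hq
  unfold cartanPart
  match_scalars
  · field_simp
  · field_simp; ring

theorem F_pow_mul_Ω_sub_cartanPart (hq : q - q⁻¹ ≠ 0) (k : ℕ) :
    F q ^ k * (Ω q - cartanPart q (q ^ (2 * k + 1))) = E q * F q ^ (k + 1) := by
  have hq0 : q ≠ 0 := by rintro rfl; simp at hq
  induction k with
  | zero =>
    have h := cartanPart_sub_cartanPart_mul_sq hq (inv_ne_zero hq0)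
    rw [show q⁻¹ * q ^ 2 = q by field_simp, inv_mul_cancel₀ hq0] at h
    rw [pow_zero, one_mul, zero_add, pow_one, Ω_eq_F_mul_E_add_cartanPart, add_sub_assoc, h,
      inv_one, one_smul, one_smul, ← E_mul_F_sub_F_mul_E, add_sub_cancel, pow_one]
  | succ k ih =>
    have h := cartanPart_sub_cartanPart_mul_sq hq (pow_ne_zero (2 * k + 1) hq0)
    rw [show q ^ (2 * k + 1) * q ^ 2 = q ^ (2 * (k + 1) + 1) by ring,
      show q ^ (2 * k + 1) * q = (q ^ 2) ^ (k + 1) by ring] at h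
    calc F q ^ (k + 1) * (Ω q - cartanPart q (q ^ (2 * (k + 1) + 1)))
        = F q * (F q ^ k * (Ω q - cartanPart q (q ^ (2 * k + 1))))
          + F q ^ (k + 1) * (cartanPart q (q ^ (2 * k + 1))
            - cartanPart q (q ^ (2 * (k + 1) + 1))) := by
          rw [← mul_assoc, ← pow_succ', ← mul_add, sub_add_sub_cancel]
      _ = (F q * E q + (q - q⁻¹)⁻¹ • (K q - Kinv q)) * F q ^ (k + 1) := by
          rw [ih, h, mul_smul_comm, F_pow_mul_smul_K_sub_smul_Kinv hq0, add_mul, mul_assoc,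
            smul_mul_assoc]
      _ = E q * F q ^ (k + 1 + 1) := by
          rw [← E_mul_F_sub_F_mul_E, add_sub_cancel, mul_assoc, ← pow_succ']

end Uq

theorem Complex.exp_pi_mul_I_div_sub_inv_ne_zero {r : ℕ} (hr : 2 ≤ r) :
    Complex.exp (Real.pi * Complex.I / r) - (Complex.exp (Real.pi * Complex.I / r))⁻¹ ≠ 0 := by
  set q := Complex.exp (Real.pi * Complex.I / r)
  have hq0 : q ≠ 0 := Complex.exp_ne_zero _
  have hq2 : q ^ 2 ≠ 1 := by
    rw [← Complex.exp_nat_mul, show ((2 : ℕ) : ℂ) * (Real.pi * Complex.I / r)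
      = 2 * Real.pi * Complex.I / r by ring]
    exact (Complex.isPrimitiveRoot_exp r (by omega)).ne_one (by omega)
  intro h
  apply hq2
  field_simp at h
  linear_combination h

open Uq in
theorem prod_casimir_factors_eq_pow_mul_pow (r : ℕ) (hr : 2 ≤ r)
    (q : ℂ) (hq : q = Complex.exp (Real.pi * Complex.I / r)) (k : ℕ) :
    ((List.range k).map fun i =>
        Ω q - ((q - q⁻¹) ^ 2)⁻¹ •
          ((q ^ (2 * i + 1))⁻¹ • K q + q ^ (2 * i + 1) • Kinv q)).prod
      = E q ^ k * F q ^ k := by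
  have hq' : q - q⁻¹ ≠ 0 := hq ▸ Complex.exp_pi_mul_I_div_sub_inv_ne_zero hr
  induction k with
  | zero => simp
  | succ k ih =>
    rw [List.prod_range_succ, ih, mul_assoc]
    change E q ^ k * (F q ^ k * (Ω q - cartanPart q (q ^ (2 * k + 1)))) = _
    rw [F_pow_mul_Ω_sub_cartanPart hq' k, ← mul_assoc, ← pow_succ]
end

section
/- Let r ≥ 2 be an integer and q = exp(iπ/r) ∈ ℂ. Let Ū_q(sl2) be the ℂ-algebra with generators E, F, K, K⁻¹ and relations KK⁻¹ = K⁻¹K = 1, KEK⁻¹ = q²E, KFK⁻¹ = q⁻²F, EF − FE = (K − K⁻¹)/(q − q⁻¹), E^r = 0, F^r = 0, and let Ω := FE + (qK + q⁻¹K⁻¹)/(q − q⁻¹)². Then for every natural number k, the element Ω^k − E^k F^k lies in the ℂ-linear span of {E^j F^j K^i : 0 ≤ j < k, i ∈ ℤ}, where K^i for negative i denotes powers of K⁻¹. -/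
open FreeAlgebra in
/-- Defining relations of `Ū_q(sl2)` (with the nilpotency relations `E^r = F^r = 0`). -/
inductive SL2BarRel (q : ℂ) (r : ℕ) : FreeAlgebra ℂ SL2Gen → FreeAlgebra ℂ SL2Gen → Prop
  | K_Kinv : SL2BarRel q r (ι ℂ SL2Gen.K * ι ℂ SL2Gen.Kinv) 1
  | Kinv_K : SL2BarRel q r (ι ℂ SL2Gen.Kinv * ι ℂ SL2Gen.K) 1
  | K_E : SL2BarRel q r (ι ℂ SL2Gen.K * ι ℂ SL2Gen.E * ι ℂ SL2Gen.Kinv) (q ^ 2 • ι ℂ SL2Gen.E)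
  | K_F : SL2BarRel q r (ι ℂ SL2Gen.K * ι ℂ SL2Gen.F * ι ℂ SL2Gen.Kinv)
      ((q ^ 2)⁻¹ • ι ℂ SL2Gen.F)
  | E_F : SL2BarRel q r (ι ℂ SL2Gen.E * ι ℂ SL2Gen.F - ι ℂ SL2Gen.F * ι ℂ SL2Gen.E)
      ((q - q⁻¹)⁻¹ • (ι ℂ SL2Gen.K - ι ℂ SL2Gen.Kinv))
  | E_pow : SL2BarRel q r (ι ℂ SL2Gen.E ^ r) 0
  | F_pow : SL2BarRel q r (ι ℂ SL2Gen.F ^ r) 0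

/-- `Ū_q(sl2)`. -/
abbrev UqBar (q : ℂ) (r : ℕ) : Type := RingQuot (SL2BarRel q r)

namespace UqBar

variable (q : ℂ) (r : ℕ)

noncomputable def E : UqBar q r := RingQuot.mkAlgHom ℂ (SL2BarRel q r) (FreeAlgebra.ι ℂ SL2Gen.E)
noncomputable def F : UqBar q r := RingQuot.mkAlgHom ℂ (SL2BarRel q r) (FreeAlgebra.ι ℂ SL2Gen.F)
noncomputable def K : UqBar q r := RingQuot.mkAlgHom ℂ (SL2BarRel q r) (FreeAlgebra.ι ℂ SL2Gen.K)
noncomputable def Kinv : UqBar q r :=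
  RingQuot.mkAlgHom ℂ (SL2BarRel q r) (FreeAlgebra.ι ℂ SL2Gen.Kinv)

/-- `K^i` for an integer exponent `i`, using `K⁻¹` for negative `i`. -/
noncomputable def Kz (i : ℤ) : UqBar q r := K q r ^ i.toNat * Kinv q r ^ (-i).toNat

/-- The Casimir element `Ω = FE + (qK + q⁻¹K⁻¹)/(q - q⁻¹)²`. -/
noncomputable def Ω : UqBar q r :=
  F q r * E q r + ((q - q⁻¹) ^ 2)⁻¹ • (q • K q r + q⁻¹ • Kinv q r)

end UqBar

/-! The Casimir element is central: it commutes with `K` by the conjugation relations, and with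
`F` because it can also be written `Ω = EF + (q⁻¹K + qK⁻¹)/(q - q⁻¹)²`. Hence
`E^j F^j Ω = E^j Ω F^j = E^(j+1) F^(j+1) + a E^j F^j K + b E^j F^j K⁻¹`, so right multiplication
by `Ω` maps the span of the `E^j F^j K^i` with `j < k` into the one with `j < k + 1`, and the
theorem follows by induction from
`Ω^(k+1) - E^(k+1) F^(k+1) = (Ω^k - E^k F^k) Ω + (E^k F^k Ω - E^(k+1) F^(k+1))`. -/

theorem Units.val_mul_pow_of_conj_eq_smul {R A : Type*} [CommSemiring R] [Semiring A]
    [Algebra R A] (u : Aˣ) {x : A} {c : R} (h : ↑u * x * ↑u⁻¹ = c • x) (n : ℕ) :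
    ↑u * x ^ n = c ^ n • (x ^ n * ↑u) := by
  rw [← smul_mul_assoc, ← smul_pow, ← h, Units.conj_pow, Units.inv_mul_cancel_right]

namespace UqBar

variable {q : ℂ} {r : ℕ}

lemma K_mul_Kinv : K q r * Kinv q r = 1 := by
  simpa [K, Kinv] using RingQuot.mkAlgHom_rel ℂ (SL2BarRel.K_Kinv (q := q) (r := r))

lemma Kinv_mul_K : Kinv q r * K q r = 1 := by
  simpa [K, Kinv] using RingQuot.mkAlgHom_rel ℂ (SL2BarRel.Kinv_K (q := q) (r := r))

lemma K_mul_E_mul_Kinv : K q r * E q r * Kinv q r = q ^ 2 • E q r := by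
  simpa [K, E, Kinv] using RingQuot.mkAlgHom_rel ℂ (SL2BarRel.K_E (q := q) (r := r))

lemma K_mul_F_mul_Kinv : K q r * F q r * Kinv q r = (q ^ 2)⁻¹ • F q r := by
  simpa [K, F, Kinv] using RingQuot.mkAlgHom_rel ℂ (SL2BarRel.K_F (q := q) (r := r))

lemma E_mul_F : E q r * F q r = F q r * E q r + (q - q⁻¹)⁻¹ • (K q r - Kinv q r) := by
  rw [← sub_eq_iff_eq_add']
  simpa [E, F, K, Kinv] using RingQuot.mkAlgHom_rel ℂ (SL2BarRel.E_F (q := q) (r := r))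

variable (q r) in
noncomputable def Kunit : (UqBar q r)ˣ := ⟨K q r, Kinv q r, K_mul_Kinv, Kinv_mul_K⟩

@[simp]
lemma val_Kunit : ↑(Kunit q r) = K q r := rfl

@[simp]
lemma val_Kunit_inv : ↑(Kunit q r)⁻¹ = Kinv q r := rfl

lemma Kz_eq_val_zpow (i : ℤ) : Kz q r i = ↑(Kunit q r ^ i) := by
  cases i with
  | ofNat n => simp [Kz]
  | negSucc n => simp [Kz, zpow_negSucc]

lemma Kz_zero : Kz q r 0 = 1 := by simp [Kz]

lemma Kz_one : Kz q r 1 = K q r := by simp [Kz]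

lemma Kz_neg_one : Kz q r (-1) = Kinv q r := by simp [Kz]

lemma Kz_add (i i' : ℤ) : Kz q r (i + i') = Kz q r i * Kz q r i' := by
  simp only [Kz_eq_val_zpow, zpow_add, Units.val_mul]

lemma Kinv_mul_F_mul_K (hq : q ≠ 0) : Kinv q r * F q r * K q r = q ^ 2 • F q r := by
  have hF : F q r = q ^ 2 • (K q r * F q r * Kinv q r) := by
    rw [K_mul_F_mul_Kinv, smul_smul, mul_inv_cancel₀ (pow_ne_zero 2 hq), one_smul]
  conv_lhs => rw [hF]
  simp only [mul_smul_comm, smul_mul_assoc, ← mul_assoc, Kinv_mul_K, one_mul]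
  rw [mul_assoc, Kinv_mul_K, mul_one]

lemma K_mul_F_pow (j : ℕ) : K q r * F q r ^ j = ((q ^ 2)⁻¹) ^ j • (F q r ^ j * K q r) :=
  (Kunit q r).val_mul_pow_of_conj_eq_smul K_mul_F_mul_Kinv j

lemma Kinv_mul_F_pow (hq : q ≠ 0) (j : ℕ) :
    Kinv q r * F q r ^ j = (q ^ 2) ^ j • (F q r ^ j * Kinv q r) :=
  (Kunit q r)⁻¹.val_mul_pow_of_conj_eq_smul (by simpa using Kinv_mul_F_mul_K hq) j

lemma K_mul_E : K q r * E q r = q ^ 2 • (E q r * K q r) := by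
  simpa using (Kunit q r).val_mul_pow_of_conj_eq_smul K_mul_E_mul_Kinv 1

lemma K_mul_F : K q r * F q r = (q ^ 2)⁻¹ • (F q r * K q r) := by
  simpa using K_mul_F_pow (q := q) (r := r) 1

lemma Kinv_mul_F (hq : q ≠ 0) : Kinv q r * F q r = q ^ 2 • (F q r * Kinv q r) := by
  simpa using Kinv_mul_F_pow (r := r) hq 1

lemma Omega_eq_E_mul_F :
    Ω q r = E q r * F q r + ((q - q⁻¹) ^ 2)⁻¹ • (q⁻¹ • K q r + q • Kinv q r) := by
  have hd : (q - q⁻¹)⁻¹ = ((q - q⁻¹) ^ 2)⁻¹ * (q - q⁻¹) := by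
    rcases eq_or_ne (q - q⁻¹) 0 with h | h
    · simp [h]
    · field_simp
  rw [Ω, E_mul_F, hd]
  module

lemma commute_F_mul_E_K (hq : q ≠ 0) : Commute (F q r * E q r) (K q r) := by
  symm
  rw [Commute, SemiconjBy, ← mul_assoc, K_mul_F, smul_mul_assoc, mul_assoc (F q r), K_mul_E,
    mul_smul_comm, smul_smul, inv_mul_cancel₀ (pow_ne_zero 2 hq), one_smul, ← mul_assoc]

lemma commute_Omega_K (hq : q ≠ 0) : Commute (Ω q r) (K q r) :=
  have hKinv : Commute (Kinv q r) (K q r) := Kinv_mul_K.trans K_mul_Kinv.symm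
  (commute_F_mul_E_K hq).add_left
    ((((Commute.refl _).smul_left q).add_left (hKinv.smul_left _)).smul_left _)

lemma commute_Omega_F (hq : q ≠ 0) : Commute (Ω q r) (F q r) := by
  have hK : q • (K q r * F q r) = q⁻¹ • (F q r * K q r) := by
    rw [K_mul_F, smul_smul]; congr 1; field_simp
  have hKinv : q⁻¹ • (Kinv q r * F q r) = q • (F q r * Kinv q r) := by
    rw [Kinv_mul_F hq, smul_smul]; congr 1; field_simp
  calc Ω q r * F q r
      = F q r * (E q r * F q r)
        + ((q - q⁻¹) ^ 2)⁻¹ • (q • (K q r * F q r) + q⁻¹ • (Kinv q r * F q r)) := by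
        simp only [Ω, add_mul, smul_mul_assoc, mul_assoc]
    _ = F q r * Ω q r := by
        rw [hK, hKinv, Omega_eq_E_mul_F]
        simp only [mul_add, mul_smul_comm]

lemma commute_Omega_Kz (hq : q ≠ 0) (i : ℤ) : Commute (Ω q r) (Kz q r i) := by
  rw [Kz_eq_val_zpow]
  exact (commute_Omega_K hq).units_zpow_right i

lemma E_pow_mul_F_pow_mul_Omega (hq : q ≠ 0) (j : ℕ) :
    E q r ^ j * F q r ^ j * Ω q r = E q r ^ (j + 1) * F q r ^ (j + 1)
      + (((q - q⁻¹) ^ 2)⁻¹ * (q ^ (2 * j + 1))⁻¹) • (E q r ^ j * F q r ^ j * K q r)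
      + (((q - q⁻¹) ^ 2)⁻¹ * q ^ (2 * j + 1)) • (E q r ^ j * F q r ^ j * Kinv q r) := by
  rw [mul_assoc, ← ((commute_Omega_F hq).pow_right j).eq, Omega_eq_E_mul_F]
  simp only [mul_add, add_mul, mul_smul_comm, smul_mul_assoc, mul_assoc, K_mul_F_pow,
    Kinv_mul_F_pow hq, pow_succ (E q r) j, pow_succ' (F q r) j]
  module

variable (q r) in
def spanEFK (k : ℕ) : Submodule ℂ (UqBar q r) :=
  Submodule.span ℂ
    {x : UqBar q r | ∃ j : ℕ, j < k ∧ ∃ i : ℤ, x = E q r ^ j * F q r ^ j * Kz q r i}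

lemma spanEFK_mono : Monotone (spanEFK q r) := fun _ _ hk =>
  Submodule.span_mono fun _ ⟨j, hj, i, hx⟩ => ⟨j, hj.trans_le hk, i, hx⟩

lemma E_pow_mul_F_pow_mul_Kz_mem {j k : ℕ} (hj : j < k) (i : ℤ) :
    E q r ^ j * F q r ^ j * Kz q r i ∈ spanEFK q r k :=
  Submodule.subset_span ⟨j, hj, i, rfl⟩

lemma E_pow_mul_F_pow_mul_Kz_mul_Omega_sub_mem (hq : q ≠ 0) (j : ℕ) (i : ℤ) :
    E q r ^ j * F q r ^ j * Kz q r i * Ω q r - E q r ^ (j + 1) * F q r ^ (j + 1) * Kz q r i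
      ∈ spanEFK q r (j + 1) := by
  have h : E q r ^ j * F q r ^ j * Kz q r i * Ω q r
      - E q r ^ (j + 1) * F q r ^ (j + 1) * Kz q r i
      = (((q - q⁻¹) ^ 2)⁻¹ * (q ^ (2 * j + 1))⁻¹) • (E q r ^ j * F q r ^ j * Kz q r (1 + i))
        + (((q - q⁻¹) ^ 2)⁻¹ * q ^ (2 * j + 1)) • (E q r ^ j * F q r ^ j * Kz q r (-1 + i)) := by
    rw [mul_assoc _ (Kz q r i), ← (commute_Omega_Kz hq i).eq, ← mul_assoc,
      E_pow_mul_F_pow_mul_Omega hq, Kz_add, Kz_add, Kz_one, Kz_neg_one]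
    simp only [add_mul, smul_mul_assoc, mul_assoc]
    abel
  rw [h]
  exact add_mem (Submodule.smul_mem _ _ (E_pow_mul_F_pow_mul_Kz_mem j.lt_succ_self _))
    (Submodule.smul_mem _ _ (E_pow_mul_F_pow_mul_Kz_mem j.lt_succ_self _))

lemma mul_Omega_mem_spanEFK (hq : q ≠ 0) {k : ℕ} {x : UqBar q r} (hx : x ∈ spanEFK q r k) :
    x * Ω q r ∈ spanEFK q r (k + 1) := by
  suffices spanEFK q r k ≤ (spanEFK q r (k + 1)).comap (LinearMap.mulRight ℂ (Ω q r)) from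
    this hx
  refine Submodule.span_le.mpr ?_
  rintro _ ⟨j, hj, i, rfl⟩
  rw [SetLike.mem_coe, Submodule.mem_comap, LinearMap.mulRight_apply,
    ← sub_add_cancel (_ * Ω q r) (E q r ^ (j + 1) * F q r ^ (j + 1) * Kz q r i)]
  exact add_mem (spanEFK_mono (by omega) (E_pow_mul_F_pow_mul_Kz_mul_Omega_sub_mem hq j i))
    (E_pow_mul_F_pow_mul_Kz_mem (by omega) i)

end UqBar

open UqBar in
theorem casimir_pow_sub_pow_mem_span_general (r : ℕ)
    (q : ℂ) (hq : q = Complex.exp (Real.pi * Complex.I / r)) (k : ℕ) :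
    Ω q r ^ k - E q r ^ k * F q r ^ k ∈
      Submodule.span ℂ
        {x : UqBar q r | ∃ j : ℕ, j < k ∧ ∃ i : ℤ, x = E q r ^ j * F q r ^ j * Kz q r i} := by
  have hq0 : q ≠ 0 := hq ▸ Complex.exp_ne_zero _
  change _ ∈ spanEFK q r k
  induction k with
  | zero => simp
  | succ k ih =>
    have h := add_mem (mul_Omega_mem_spanEFK hq0 ih)
      (E_pow_mul_F_pow_mul_Kz_mul_Omega_sub_mem hq0 k 0)
    rw [Kz_zero, mul_one, mul_one] at h
    convert h using 1
    rw [pow_succ, sub_mul]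
    abel

open UqBar in
theorem casimir_pow_sub_pow_mem_span (r : ℕ) (hr : 2 ≤ r)
    (q : ℂ) (hq : q = Complex.exp (Real.pi * Complex.I / r)) (k : ℕ) :
    Ω q r ^ k - E q r ^ k * F q r ^ k ∈
      Submodule.span ℂ
        {x : UqBar q r | ∃ j : ℕ, j < k ∧ ∃ i : ℤ, x = E q r ^ j * F q r ^ j * Kz q r i} :=
  casimir_pow_sub_pow_mem_span_general r q hq k
end
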